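/- arXiv:1004.0171 — 5 statements merged into one kernel-verified Lean document; each statement's English description precedes it below -/
import Mathlib

section
/- Let A, B be Hopf algebras with a generalized Hopf pairing φ, and let H = B ⊗ A be the tensor product Hopf algebra. Then the bilinear form σ(b⊗a, b'⊗a') = ε(b)·φ(a, b')·ε(a') is a convolution-invertible 2-cocycle on H, with convolution inverse σ^{-1}(b⊗a, b'⊗a') = ε(b)·φ(a, S(b'))·ε(a'). -/
open Coalgebra TensorProduct

section PairMul

variable {K : Type*} [CommRing K] {M : Type*} [AddCommGroup M] [Module K M]

/-- `(u₁⊗u₂, v₁⊗v₂) ↦ f u₁ v₁ * g u₂ v₂` as a bilinear form on `M ⊗ M`. -/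
noncomputable def pairMul (f g : M →ₗ[K] M →ₗ[K] K) :
    (M ⊗[K] M) →ₗ[K] (M ⊗[K] M) →ₗ[K] K :=
  TensorProduct.curry ((LinearMap.mul' K K) ∘ₗ
    (TensorProduct.map (TensorProduct.lift f) (TensorProduct.lift g)) ∘ₗ
    (TensorProduct.tensorTensorTensorComm K M M M M).toLinearMap)

@[simp] lemma pairMul_apply (f g : M →ₗ[K] M →ₗ[K] K) (u1 u2 v1 v2 : M) :
    pairMul f g (u1 ⊗ₜ u2) (v1 ⊗ₜ v2) = f u1 v1 * g u2 v2 := by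
  simp [pairMul]

lemma pairMul_add_right (f g g' : M →ₗ[K] M →ₗ[K] K) :
    pairMul f (g + g') = pairMul f g + pairMul f g' := by
  ext u1 u2 v1 v2
  simp [mul_add]

lemma pairMul_zero_right (f : M →ₗ[K] M →ₗ[K] K) :
    pairMul f (0 : M →ₗ[K] M →ₗ[K] K) = 0 := by
  ext u1 u2 v1 v2
  simp

end PairMul

section MulPair

variable {K : Type*} [CommRing K] {M : Type*} [Ring M] [Algebra K M]

/-- `x ↦ (u,v) ↦ σ x (u*v)`, linear in `x`. -/
noncomputable def mulPair (σ : M →ₗ[K] M →ₗ[K] K) : M →ₗ[K] M →ₗ[K] M →ₗ[K] K :=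
  (TensorProduct.lcurry (RingHom.id K) M M K) ∘ₗ
    ((LinearMap.llcomp K (M ⊗[K] M) M K).flip (LinearMap.mul' K M)) ∘ₗ σ

@[simp] lemma mulPair_apply (σ : M →ₗ[K] M →ₗ[K] K) (x u v : M) :
    mulPair σ x u v = σ x (u * v) := by
  simp [mulPair]

end MulPair

section Collapse

variable {K : Type*} [CommRing K] {C : Type*} [AddCommGroup C] [Module K C] [Coalgebra K C]

lemma repr_sum_counit_smul {c : C} (r : Coalgebra.Repr K c ιc) :
    ∑ i ∈ r.index, counit (R := K) (r.left i) • r.right i = c := by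
  have h2 := congrArg (TensorProduct.lid K C) (Coalgebra.sum_counit_tmul_eq r)
  rw [map_sum] at h2
  simpa only [TensorProduct.lid_tmul, one_smul] using h2

lemma repr_sum_smul_counit {c : C} (r : Coalgebra.Repr K c ιc) :
    ∑ i ∈ r.index, counit (R := K) (r.right i) • r.left i = c := by
  have h2 := congrArg (TensorProduct.rid K C) (Coalgebra.sum_tmul_counit_eq r)
  rw [map_sum] at h2
  simpa only [TensorProduct.rid_tmul, one_smul] using h2

lemma collapse_left {c : C} (r : Coalgebra.Repr K c ιc) (f : C →ₗ[K] K) :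
    ∑ i ∈ r.index, counit (R := K) (r.left i) * f (r.right i) = f c := by
  conv_rhs => rw [← repr_sum_counit_smul r]
  rw [map_sum]
  simp [smul_eq_mul]

lemma collapse_right {c : C} (r : Coalgebra.Repr K c ιc) (f : C →ₗ[K] K) :
    ∑ i ∈ r.index, f (r.left i) * counit (R := K) (r.right i) = f c := by
  conv_rhs => rw [← repr_sum_smul_counit r]
  rw [map_sum]
  simp [smul_eq_mul, mul_comm]

lemma apply_comul₂ {x y : C} (rx : Coalgebra.Repr K x ιx) (ry : Coalgebra.Repr K y ιy)
    (G : (C ⊗[K] C) →ₗ[K] (C ⊗[K] C) →ₗ[K] K) :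
    G (comul x) (comul y) =
      ∑ i ∈ rx.index, ∑ j ∈ ry.index,
        G (rx.left i ⊗ₜ rx.right i) (ry.left j ⊗ₜ ry.right j) := by
  rw [← rx.eq, ← ry.eq]
  simp only [map_sum, LinearMap.sum_apply]
  exact Finset.sum_comm

end Collapse


section Main

variable {K A B : Type*} [Field K] [Ring A] [Ring B] [HopfAlgebra K A] [HopfAlgebra K B]

lemma comul_tmul_repr (b : B) (a : A) (rb : Coalgebra.Repr K b ιb) (ra : Coalgebra.Repr K a ιa) :
    Coalgebra.comul (R := K) (b ⊗ₜ[K] a) =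
      ∑ i ∈ rb.index, ∑ j ∈ ra.index,
        (rb.left i ⊗ₜ[K] ra.left j) ⊗ₜ[K] (rb.right i ⊗ₜ[K] ra.right j) := by
  have h : Coalgebra.comul (R := K) (b ⊗ₜ[K] a) =
      (TensorProduct.tensorTensorTensorComm K B B A A).toLinearMap
        (Coalgebra.comul (R := K) b ⊗ₜ Coalgebra.comul (R := K) a) := rfl
  rw [h, ← rb.eq, ← ra.eq, sum_tmul]
  rw [map_sum]
  simp only [tmul_sum, map_sum, LinearEquiv.coe_coe, tensorTensorTensorComm_tmul]

lemma counit_tmul (b : B) (a : A) :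
    Coalgebra.counit (R := K) (b ⊗ₜ[K] a) =
      Coalgebra.counit (R := K) b * Coalgebra.counit (R := K) a := by
  have h : Coalgebra.counit (R := K) (b ⊗ₜ[K] a) =
      LinearMap.mul' K K (TensorProduct.map (Coalgebra.counit (R := K))
        (Coalgebra.counit (R := K)) (b ⊗ₜ[K] a)) := by
    rw [TensorProduct.counit_tmul, TensorProduct.map_tmul, LinearMap.mul'_apply, smul_eq_mul,
      mul_comm]
  rw [h, TensorProduct.map_tmul, LinearMap.mul'_apply]

end Main

section ReprSmall

variable {K C : Type*} [CommRing K] [AddCommGroup C] [Module K C]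

/-- A Sweedler representation whose index type lives in an arbitrary universe. -/
noncomputable def reprSmall [CoalgebraStruct K C] (c : C) :
    Coalgebra.Repr K c (ULift (Fin (ℛ K c).index.card)) where
  index := (Finset.univ : Finset (ULift (Fin (ℛ K c).index.card)))
  left := fun i => (ℛ K c).left ((ℛ K c).index.equivFin.symm (Equiv.ulift i))
  right := fun i => (ℛ K c).right ((ℛ K c).index.equivFin.symm (Equiv.ulift i))
  eq := by
    rw [← (ℛ K c).eq,
      ← Finset.sum_coe_sort (ℛ K c).index (fun i => (ℛ K c).left i ⊗ₜ[K] (ℛ K c).right i),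
      ← Equiv.sum_comp (Equiv.ulift.trans (ℛ K c).index.equivFin.symm)]
    rfl

lemma sum_repr_eq_lift [Coalgebra K C] (F : C →ₗ[K] C →ₗ[K] K) {c : C}
    (r : Coalgebra.Repr K c ιc) :
    ∑ i ∈ r.index, F (r.left i) (r.right i) =
      TensorProduct.lift F (Coalgebra.comul (R := K) c) := by
  rw [← r.eq, map_sum]
  simp

end ReprSmall

section Core

variable {K A B : Type*} [Field K] [Ring A] [Ring B] [HopfAlgebra K A] [HopfAlgebra K B]

lemma core_left
    (φ : A →ₗ[K] B →ₗ[K] K)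
    (σ : (B ⊗[K] A) →ₗ[K] (B ⊗[K] A) →ₗ[K] K)
    (hσ : ∀ (b : B) (a : A) (b' : B) (a' : A),
      σ (b ⊗ₜ a) (b' ⊗ₜ a') =
        Coalgebra.counit (R := K) b * φ a b' * Coalgebra.counit (R := K) a')
    (b : B) (a : A) (b' : B) (a' : A) (b'' : B) (a'' : A)
    (rb : Coalgebra.Repr K b ιb) (ra : Coalgebra.Repr K a ιa) (rb' : Coalgebra.Repr K b' ιbp)
    (ra' : Coalgebra.Repr K a' ιap) (rb'' : Coalgebra.Repr K b'' ιbpp)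
    (ha : ∀ (b1 b2 : B), φ a (b1 * b2) =
      ∑ j ∈ ra.index, φ (ra.left j) b1 * φ (ra.right j) b2)
    (hb'' : ∀ (x y : A), φ (x * y) b'' =
      ∑ m ∈ rb''.index, φ x (rb''.right m) * φ y (rb''.left m)) :
    pairMul σ (mulPair σ.flip (b'' ⊗ₜ[K] a''))
        (Coalgebra.comul (R := K) (b ⊗ₜ[K] a)) (Coalgebra.comul (R := K) (b' ⊗ₜ[K] a')) =
      Coalgebra.counit (R := K) b * Coalgebra.counit (R := K) a'' *
        ∑ m ∈ rb''.index, φ a' (rb''.left m) * φ a (b' * rb''.right m) := by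
  rw [comul_tmul_repr b a rb ra, comul_tmul_repr b' a' rb' ra']
  simp only [map_sum, LinearMap.sum_apply, pairMul_apply, mulPair_apply, LinearMap.flip_apply,
    Algebra.TensorProduct.tmul_mul_tmul, hσ, Bialgebra.counit_mul]
  calc
      ∑ k ∈ rb'.index, ∑ l ∈ ra'.index, ∑ i ∈ rb.index, ∑ j ∈ ra.index,
          Coalgebra.counit (R := K) (rb.left i) * φ (ra.left j) (rb'.left k) *
              Coalgebra.counit (R := K) (ra'.left l) *
            (Coalgebra.counit (R := K) (rb.right i) * Coalgebra.counit (R := K) (rb'.right k) *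
                φ (ra.right j * ra'.right l) b'' * Coalgebra.counit (R := K) a'')
    _ = ∑ k ∈ rb'.index, ∑ l ∈ ra'.index, ∑ i ∈ rb.index,
          (Coalgebra.counit (R := K) (rb.left i) * Coalgebra.counit (R := K) (rb.right i)) *
            ((Coalgebra.counit (R := K) (ra'.left l) * Coalgebra.counit (R := K) a'' *
                Coalgebra.counit (R := K) (rb'.right k)) *
              ∑ m ∈ rb''.index,
                φ a (rb'.left k * rb''.right m) * φ (ra'.right l) (rb''.left m)) := by
        refine Finset.sum_congr rfl fun k _ => Finset.sum_congr rfl fun l _ =>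
          Finset.sum_congr rfl fun i _ => ?_
        have hj : ∑ j ∈ ra.index, φ (ra.left j) (rb'.left k) * φ (ra.right j * ra'.right l) b'' =
            ∑ m ∈ rb''.index, φ a (rb'.left k * rb''.right m) * φ (ra'.right l) (rb''.left m) := by
          calc
              ∑ j ∈ ra.index, φ (ra.left j) (rb'.left k) * φ (ra.right j * ra'.right l) b''
            _ = ∑ j ∈ ra.index, ∑ m ∈ rb''.index,
                  (φ (ra.left j) (rb'.left k) * φ (ra.right j) (rb''.right m)) *
                    φ (ra'.right l) (rb''.left m) := by
                refine Finset.sum_congr rfl fun j _ => ?_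
                rw [hb'' (ra.right j) (ra'.right l), Finset.mul_sum]
                exact Finset.sum_congr rfl fun m _ => by ring
            _ = ∑ m ∈ rb''.index, ∑ j ∈ ra.index,
                  (φ (ra.left j) (rb'.left k) * φ (ra.right j) (rb''.right m)) *
                    φ (ra'.right l) (rb''.left m) := Finset.sum_comm
            _ = ∑ m ∈ rb''.index,
                  φ a (rb'.left k * rb''.right m) * φ (ra'.right l) (rb''.left m) := by
                refine Finset.sum_congr rfl fun m _ => ?_
                rw [← Finset.sum_mul, ← ha (rb'.left k) (rb''.right m)]
        calc
            ∑ j ∈ ra.index,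
              Coalgebra.counit (R := K) (rb.left i) * φ (ra.left j) (rb'.left k) *
                  Coalgebra.counit (R := K) (ra'.left l) *
                (Coalgebra.counit (R := K) (rb.right i) * Coalgebra.counit (R := K) (rb'.right k) *
                    φ (ra.right j * ra'.right l) b'' * Coalgebra.counit (R := K) a'')
          _ = ∑ j ∈ ra.index,
                ((Coalgebra.counit (R := K) (rb.left i) * Coalgebra.counit (R := K) (rb.right i)) *
                  (Coalgebra.counit (R := K) (ra'.left l) * Coalgebra.counit (R := K) a'' *
                      Coalgebra.counit (R := K) (rb'.right k))) *
                  (φ (ra.left j) (rb'.left k) * φ (ra.right j * ra'.right l) b'') :=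
              Finset.sum_congr rfl fun j _ => by ring
          _ = _ := by rw [← Finset.mul_sum, hj, mul_assoc]
    _ = ∑ k ∈ rb'.index, ∑ l ∈ ra'.index,
          Coalgebra.counit (R := K) b *
            ((Coalgebra.counit (R := K) (ra'.left l) * Coalgebra.counit (R := K) a'' *
                Coalgebra.counit (R := K) (rb'.right k)) *
              ∑ m ∈ rb''.index,
                φ a (rb'.left k * rb''.right m) * φ (ra'.right l) (rb''.left m)) := by
        refine Finset.sum_congr rfl fun k _ => Finset.sum_congr rfl fun l _ => ?_
        rw [← Finset.sum_mul, collapse_left rb (Coalgebra.counit (R := K))]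
    _ = ∑ k ∈ rb'.index, ∑ l ∈ ra'.index, ∑ m ∈ rb''.index,
          (Coalgebra.counit (R := K) b * Coalgebra.counit (R := K) a'') *
            ((Coalgebra.counit (R := K) (ra'.left l) * φ (ra'.right l) (rb''.left m)) *
              (φ a (rb'.left k * rb''.right m) * Coalgebra.counit (R := K) (rb'.right k))) := by
        refine Finset.sum_congr rfl fun k _ => Finset.sum_congr rfl fun l _ => ?_
        rw [Finset.mul_sum, Finset.mul_sum]
        exact Finset.sum_congr rfl fun m _ => by ring
    _ = ∑ m ∈ rb''.index, ∑ k ∈ rb'.index, ∑ l ∈ ra'.index,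
          (Coalgebra.counit (R := K) b * Coalgebra.counit (R := K) a'') *
            ((Coalgebra.counit (R := K) (ra'.left l) * φ (ra'.right l) (rb''.left m)) *
              (φ a (rb'.left k * rb''.right m) * Coalgebra.counit (R := K) (rb'.right k))) :=
        (Finset.sum_congr rfl fun k _ => Finset.sum_comm).trans Finset.sum_comm
    _ = Coalgebra.counit (R := K) b * Coalgebra.counit (R := K) a'' *
          ∑ m ∈ rb''.index, φ a' (rb''.left m) * φ a (b' * rb''.right m) := by
        rw [Finset.mul_sum]
        refine Finset.sum_congr rfl fun m _ => ?_
        have hl : ∑ l ∈ ra'.index,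
            Coalgebra.counit (R := K) (ra'.left l) * φ (ra'.right l) (rb''.left m) =
            φ a' (rb''.left m) := by
          simpa using collapse_left ra' (φ.flip (rb''.left m))
        have hk : ∑ k ∈ rb'.index,
            φ a (rb'.left k * rb''.right m) * Coalgebra.counit (R := K) (rb'.right k) =
            φ a (b' * rb''.right m) := by
          simpa using collapse_right rb' ((φ a) ∘ₗ LinearMap.mulRight K (rb''.right m))
        calc
            ∑ k ∈ rb'.index, ∑ l ∈ ra'.index,
              (Coalgebra.counit (R := K) b * Coalgebra.counit (R := K) a'') *
                ((Coalgebra.counit (R := K) (ra'.left l) * φ (ra'.right l) (rb''.left m)) *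
                  (φ a (rb'.left k * rb''.right m) * Coalgebra.counit (R := K) (rb'.right k)))
          _ = (Coalgebra.counit (R := K) b * Coalgebra.counit (R := K) a'') *
                ((∑ l ∈ ra'.index,
                    Coalgebra.counit (R := K) (ra'.left l) * φ (ra'.right l) (rb''.left m)) *
                  (∑ k ∈ rb'.index,
                    φ a (rb'.left k * rb''.right m) *
                      Coalgebra.counit (R := K) (rb'.right k))) := by
              rw [Finset.sum_mul_sum, Finset.mul_sum, Finset.sum_comm]
              exact Finset.sum_congr rfl fun l _ => by rw [← Finset.mul_sum]
          _ = _ := by rw [hl, hk]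

lemma core_right
    (φ : A →ₗ[K] B →ₗ[K] K)
    (σ : (B ⊗[K] A) →ₗ[K] (B ⊗[K] A) →ₗ[K] K)
    (hσ : ∀ (b : B) (a : A) (b' : B) (a' : A),
      σ (b ⊗ₜ a) (b' ⊗ₜ a') =
        Coalgebra.counit (R := K) b * φ a b' * Coalgebra.counit (R := K) a')
    (b : B) (a : A) (b' : B) (a' : A) (b'' : B) (a'' : A)
    (rb' : Coalgebra.Repr K b' ιbp) (ra' : Coalgebra.Repr K a' ιap) (rb'' : Coalgebra.Repr K b'' ιbpp)
    (ra'' : Coalgebra.Repr K a'' ιapp) :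
    pairMul σ (mulPair σ (b ⊗ₜ[K] a))
        (Coalgebra.comul (R := K) (b' ⊗ₜ[K] a')) (Coalgebra.comul (R := K) (b'' ⊗ₜ[K] a'')) =
      Coalgebra.counit (R := K) b * Coalgebra.counit (R := K) a'' *
        ∑ m ∈ rb''.index, φ a' (rb''.left m) * φ a (b' * rb''.right m) := by
  rw [comul_tmul_repr b' a' rb' ra', comul_tmul_repr b'' a'' rb'' ra'']
  simp only [map_sum, LinearMap.sum_apply, pairMul_apply, mulPair_apply, LinearMap.flip_apply,
    Algebra.TensorProduct.tmul_mul_tmul, hσ, Bialgebra.counit_mul]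
  calc
      ∑ m ∈ rb''.index, ∑ n ∈ ra''.index, ∑ k ∈ rb'.index, ∑ l ∈ ra'.index,
          Coalgebra.counit (R := K) (rb'.left k) * φ (ra'.left l) (rb''.left m) *
              Coalgebra.counit (R := K) (ra''.left n) *
            (Coalgebra.counit (R := K) b * φ a (rb'.right k * rb''.right m) *
              (Coalgebra.counit (R := K) (ra'.right l) * Coalgebra.counit (R := K) (ra''.right n)))
    _ = ∑ m ∈ rb''.index, ∑ n ∈ ra''.index, ∑ k ∈ rb'.index,
          ((Coalgebra.counit (R := K) (ra''.left n) * Coalgebra.counit (R := K) (ra''.right n)) *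
              (Coalgebra.counit (R := K) b *
                (Coalgebra.counit (R := K) (rb'.left k) * φ a (rb'.right k * rb''.right m)))) *
            φ a' (rb''.left m) := by
        refine Finset.sum_congr rfl fun m _ => Finset.sum_congr rfl fun n _ =>
          Finset.sum_congr rfl fun k _ => ?_
        have hl : ∑ l ∈ ra'.index,
            φ (ra'.left l) (rb''.left m) * Coalgebra.counit (R := K) (ra'.right l) =
            φ a' (rb''.left m) := by
          simpa using collapse_right ra' (φ.flip (rb''.left m))
        calc
            ∑ l ∈ ra'.index,
              Coalgebra.counit (R := K) (rb'.left k) * φ (ra'.left l) (rb''.left m) *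
                  Coalgebra.counit (R := K) (ra''.left n) *
                (Coalgebra.counit (R := K) b * φ a (rb'.right k * rb''.right m) *
                  (Coalgebra.counit (R := K) (ra'.right l) *
                    Coalgebra.counit (R := K) (ra''.right n)))
          _ = ∑ l ∈ ra'.index,
                ((Coalgebra.counit (R := K) (ra''.left n) *
                    Coalgebra.counit (R := K) (ra''.right n)) *
                  (Coalgebra.counit (R := K) b *
                    (Coalgebra.counit (R := K) (rb'.left k) *
                      φ a (rb'.right k * rb''.right m)))) *
                  (φ (ra'.left l) (rb''.left m) * Coalgebra.counit (R := K) (ra'.right l)) :=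
              Finset.sum_congr rfl fun l _ => by ring
          _ = _ := by rw [← Finset.mul_sum, hl]
    _ = ∑ m ∈ rb''.index, ∑ n ∈ ra''.index,
          ((Coalgebra.counit (R := K) (ra''.left n) * Coalgebra.counit (R := K) (ra''.right n)) *
              (Coalgebra.counit (R := K) b * φ a' (rb''.left m))) *
            φ a (b' * rb''.right m) := by
        refine Finset.sum_congr rfl fun m _ => Finset.sum_congr rfl fun n _ => ?_
        have hk : ∑ k ∈ rb'.index,
            Coalgebra.counit (R := K) (rb'.left k) * φ a (rb'.right k * rb''.right m) =
            φ a (b' * rb''.right m) := by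
          simpa using collapse_left rb' ((φ a) ∘ₗ LinearMap.mulRight K (rb''.right m))
        calc
            ∑ k ∈ rb'.index,
              ((Coalgebra.counit (R := K) (ra''.left n) *
                  Coalgebra.counit (R := K) (ra''.right n)) *
                (Coalgebra.counit (R := K) b *
                  (Coalgebra.counit (R := K) (rb'.left k) *
                    φ a (rb'.right k * rb''.right m)))) * φ a' (rb''.left m)
          _ = ∑ k ∈ rb'.index,
                ((Coalgebra.counit (R := K) (ra''.left n) *
                    Coalgebra.counit (R := K) (ra''.right n)) *
                  (Coalgebra.counit (R := K) b * φ a' (rb''.left m))) *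
                  (Coalgebra.counit (R := K) (rb'.left k) *
                    φ a (rb'.right k * rb''.right m)) :=
              Finset.sum_congr rfl fun k _ => by ring
          _ = _ := by rw [← Finset.mul_sum, hk]
    _ = ∑ m ∈ rb''.index,
          (Coalgebra.counit (R := K) b * (φ a' (rb''.left m) * φ a (b' * rb''.right m))) *
            Coalgebra.counit (R := K) a'' := by
        refine Finset.sum_congr rfl fun m _ => ?_
        have hn : ∑ n ∈ ra''.index,
            Coalgebra.counit (R := K) (ra''.left n) * Coalgebra.counit (R := K) (ra''.right n) =
            Coalgebra.counit (R := K) a'' := collapse_left ra'' (Coalgebra.counit (R := K))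
        calc
            ∑ n ∈ ra''.index,
              ((Coalgebra.counit (R := K) (ra''.left n) *
                  Coalgebra.counit (R := K) (ra''.right n)) *
                (Coalgebra.counit (R := K) b * φ a' (rb''.left m))) *
                φ a (b' * rb''.right m)
          _ = ∑ n ∈ ra''.index,
                ((Coalgebra.counit (R := K) b * (φ a' (rb''.left m) * φ a (b' * rb''.right m)))) *
                  (Coalgebra.counit (R := K) (ra''.left n) *
                    Coalgebra.counit (R := K) (ra''.right n)) :=
              Finset.sum_congr rfl fun n _ => by ring
          _ = _ := by rw [← Finset.mul_sum, hn]
    _ = Coalgebra.counit (R := K) b * Coalgebra.counit (R := K) a'' *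
          ∑ m ∈ rb''.index, φ a' (rb''.left m) * φ a (b' * rb''.right m) := by
        rw [Finset.mul_sum]
        exact Finset.sum_congr rfl fun m _ => by ring

lemma core_inv1
    (φ : A →ₗ[K] B →ₗ[K] K)
    (σ σinv : (B ⊗[K] A) →ₗ[K] (B ⊗[K] A) →ₗ[K] K)
    (hσ : ∀ (b : B) (a : A) (b' : B) (a' : A),
      σ (b ⊗ₜ a) (b' ⊗ₜ a') =
        Coalgebra.counit (R := K) b * φ a b' * Coalgebra.counit (R := K) a')
    (hσinv : ∀ (b : B) (a : A) (b' : B) (a' : A),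
      σinv (b ⊗ₜ a) (b' ⊗ₜ a') =
        Coalgebra.counit (R := K) b * φ a (HopfAlgebra.antipode (R := K) b') *
          Coalgebra.counit (R := K) a')
    (hφ1 : ∀ x : A, φ x 1 = Coalgebra.counit (R := K) x)
    (b : B) (a : A) (b' : B) (a' : A)
    (rb : Coalgebra.Repr K b ιb) (ra : Coalgebra.Repr K a ιa) (rb' : Coalgebra.Repr K b' ιbp)
    (ra' : Coalgebra.Repr K a' ιap)
    (ha : ∀ (b1 b2 : B), φ a (b1 * b2) =
      ∑ j ∈ ra.index, φ (ra.left j) b1 * φ (ra.right j) b2) :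
    pairMul σ σinv
        (Coalgebra.comul (R := K) (b ⊗ₜ[K] a)) (Coalgebra.comul (R := K) (b' ⊗ₜ[K] a')) =
      (Coalgebra.counit (R := K) b * Coalgebra.counit (R := K) a) *
        (Coalgebra.counit (R := K) b' * Coalgebra.counit (R := K) a') := by
  rw [comul_tmul_repr b a rb ra, comul_tmul_repr b' a' rb' ra']
  simp only [map_sum, LinearMap.sum_apply, pairMul_apply,
    Algebra.TensorProduct.tmul_mul_tmul, hσ, hσinv, Bialgebra.counit_mul]
  calc
      ∑ k ∈ rb'.index, ∑ l ∈ ra'.index, ∑ i ∈ rb.index, ∑ j ∈ ra.index,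
          Coalgebra.counit (R := K) (rb.left i) * φ (ra.left j) (rb'.left k) *
              Coalgebra.counit (R := K) (ra'.left l) *
            (Coalgebra.counit (R := K) (rb.right i) *
                φ (ra.right j) (HopfAlgebra.antipode (R := K) (rb'.right k)) *
              Coalgebra.counit (R := K) (ra'.right l))
    _ = ∑ k ∈ rb'.index, ∑ l ∈ ra'.index, ∑ i ∈ rb.index,
          (((Coalgebra.counit (R := K) (ra'.left l) * Coalgebra.counit (R := K) (ra'.right l)) *
              φ a (rb'.left k * HopfAlgebra.antipode (R := K) (rb'.right k))) *
            (Coalgebra.counit (R := K) (rb.left i) * Coalgebra.counit (R := K) (rb.right i))) := by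
        refine Finset.sum_congr rfl fun k _ => Finset.sum_congr rfl fun l _ =>
          Finset.sum_congr rfl fun i _ => ?_
        have hj : ∑ j ∈ ra.index,
            φ (ra.left j) (rb'.left k) *
              φ (ra.right j) (HopfAlgebra.antipode (R := K) (rb'.right k)) =
            φ a (rb'.left k * HopfAlgebra.antipode (R := K) (rb'.right k)) :=
          (ha (rb'.left k) (HopfAlgebra.antipode (R := K) (rb'.right k))).symm
        calc
            ∑ j ∈ ra.index,
              Coalgebra.counit (R := K) (rb.left i) * φ (ra.left j) (rb'.left k) *
                  Coalgebra.counit (R := K) (ra'.left l) *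
                (Coalgebra.counit (R := K) (rb.right i) *
                    φ (ra.right j) (HopfAlgebra.antipode (R := K) (rb'.right k)) *
                  Coalgebra.counit (R := K) (ra'.right l))
          _ = ∑ j ∈ ra.index,
                ((Coalgebra.counit (R := K) (ra'.left l) *
                    Coalgebra.counit (R := K) (ra'.right l)) *
                  (Coalgebra.counit (R := K) (rb.left i) *
                    Coalgebra.counit (R := K) (rb.right i))) *
                  (φ (ra.left j) (rb'.left k) *
                    φ (ra.right j) (HopfAlgebra.antipode (R := K) (rb'.right k))) :=
              Finset.sum_congr rfl fun j _ => by ring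
          _ = _ := by rw [← Finset.mul_sum, hj]; ring
    _ = ∑ k ∈ rb'.index,
          ((Coalgebra.counit (R := K) a' *
              φ a (rb'.left k * HopfAlgebra.antipode (R := K) (rb'.right k))) *
            Coalgebra.counit (R := K) b) := by
        refine Finset.sum_congr rfl fun k _ => ?_
        calc
            ∑ l ∈ ra'.index, ∑ i ∈ rb.index,
              Coalgebra.counit (R := K) (ra'.left l) * Coalgebra.counit (R := K) (ra'.right l) *
                  φ a (rb'.left k * HopfAlgebra.antipode (R := K) (rb'.right k)) *
                (Coalgebra.counit (R := K) (rb.left i) * Coalgebra.counit (R := K) (rb.right i))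
          _ = ∑ l ∈ ra'.index,
                (Coalgebra.counit (R := K) (ra'.left l) *
                    Coalgebra.counit (R := K) (ra'.right l)) *
                  (φ a (rb'.left k * HopfAlgebra.antipode (R := K) (rb'.right k)) * Coalgebra.counit (R := K) b) := by
              refine Finset.sum_congr rfl fun l _ => ?_
              rw [← Finset.mul_sum, collapse_left rb (Coalgebra.counit (R := K))]
              ring
          _ = Coalgebra.counit (R := K) a' *
                (φ a (rb'.left k * HopfAlgebra.antipode (R := K) (rb'.right k)) * Coalgebra.counit (R := K) b) := by
              rw [← Finset.sum_mul, collapse_left ra' (Coalgebra.counit (R := K))]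
          _ = _ := by ring
    _ = (Coalgebra.counit (R := K) a' * (Coalgebra.counit (R := K) b' *
          Coalgebra.counit (R := K) a)) * Coalgebra.counit (R := K) b := by
        rw [← Finset.sum_mul, ← Finset.mul_sum, ← map_sum,
          HopfAlgebra.sum_mul_antipode_eq_smul rb', map_smul, hφ1, smul_eq_mul]
    _ = (Coalgebra.counit (R := K) b * Coalgebra.counit (R := K) a) *
          (Coalgebra.counit (R := K) b' * Coalgebra.counit (R := K) a') := by ring

lemma core_inv2
    (φ : A →ₗ[K] B →ₗ[K] K)
    (σ σinv : (B ⊗[K] A) →ₗ[K] (B ⊗[K] A) →ₗ[K] K)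
    (hσ : ∀ (b : B) (a : A) (b' : B) (a' : A),
      σ (b ⊗ₜ a) (b' ⊗ₜ a') =
        Coalgebra.counit (R := K) b * φ a b' * Coalgebra.counit (R := K) a')
    (hσinv : ∀ (b : B) (a : A) (b' : B) (a' : A),
      σinv (b ⊗ₜ a) (b' ⊗ₜ a') =
        Coalgebra.counit (R := K) b * φ a (HopfAlgebra.antipode (R := K) b') *
          Coalgebra.counit (R := K) a')
    (hφ1 : ∀ x : A, φ x 1 = Coalgebra.counit (R := K) x)
    (b : B) (a : A) (b' : B) (a' : A)
    (rb : Coalgebra.Repr K b ιb) (ra : Coalgebra.Repr K a ιa) (rb' : Coalgebra.Repr K b' ιbp)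
    (ra' : Coalgebra.Repr K a' ιap)
    (ha : ∀ (b1 b2 : B), φ a (b1 * b2) =
      ∑ j ∈ ra.index, φ (ra.left j) b1 * φ (ra.right j) b2) :
    pairMul σinv σ
        (Coalgebra.comul (R := K) (b ⊗ₜ[K] a)) (Coalgebra.comul (R := K) (b' ⊗ₜ[K] a')) =
      (Coalgebra.counit (R := K) b * Coalgebra.counit (R := K) a) *
        (Coalgebra.counit (R := K) b' * Coalgebra.counit (R := K) a') := by
  rw [comul_tmul_repr b a rb ra, comul_tmul_repr b' a' rb' ra']
  simp only [map_sum, LinearMap.sum_apply, pairMul_apply,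
    Algebra.TensorProduct.tmul_mul_tmul, hσ, hσinv, Bialgebra.counit_mul]
  calc
      ∑ k ∈ rb'.index, ∑ l ∈ ra'.index, ∑ i ∈ rb.index, ∑ j ∈ ra.index,
          Coalgebra.counit (R := K) (rb.left i) *
              φ (ra.left j) (HopfAlgebra.antipode (R := K) (rb'.left k)) *
              Coalgebra.counit (R := K) (ra'.left l) *
            (Coalgebra.counit (R := K) (rb.right i) * φ (ra.right j) (rb'.right k) *
              Coalgebra.counit (R := K) (ra'.right l))
    _ = ∑ k ∈ rb'.index, ∑ l ∈ ra'.index, ∑ i ∈ rb.index,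
          (((Coalgebra.counit (R := K) (ra'.left l) * Coalgebra.counit (R := K) (ra'.right l)) *
              φ a (HopfAlgebra.antipode (R := K) (rb'.left k) * rb'.right k)) *
            (Coalgebra.counit (R := K) (rb.left i) * Coalgebra.counit (R := K) (rb.right i))) := by
        refine Finset.sum_congr rfl fun k _ => Finset.sum_congr rfl fun l _ =>
          Finset.sum_congr rfl fun i _ => ?_
        have hj : ∑ j ∈ ra.index,
            φ (ra.left j) (HopfAlgebra.antipode (R := K) (rb'.left k)) *
              φ (ra.right j) (rb'.right k) =
            φ a (HopfAlgebra.antipode (R := K) (rb'.left k) * rb'.right k) :=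
          (ha (HopfAlgebra.antipode (R := K) (rb'.left k)) (rb'.right k)).symm
        calc
            ∑ j ∈ ra.index,
              Coalgebra.counit (R := K) (rb.left i) *
                  φ (ra.left j) (HopfAlgebra.antipode (R := K) (rb'.left k)) *
                  Coalgebra.counit (R := K) (ra'.left l) *
                (Coalgebra.counit (R := K) (rb.right i) * φ (ra.right j) (rb'.right k) *
                  Coalgebra.counit (R := K) (ra'.right l))
          _ = ∑ j ∈ ra.index,
                ((Coalgebra.counit (R := K) (ra'.left l) *
                    Coalgebra.counit (R := K) (ra'.right l)) *
                  (Coalgebra.counit (R := K) (rb.left i) *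
                    Coalgebra.counit (R := K) (rb.right i))) *
                  (φ (ra.left j) (HopfAlgebra.antipode (R := K) (rb'.left k)) *
                    φ (ra.right j) (rb'.right k)) :=
              Finset.sum_congr rfl fun j _ => by ring
          _ = _ := by rw [← Finset.mul_sum, hj]; ring
    _ = ∑ k ∈ rb'.index,
          ((Coalgebra.counit (R := K) a' *
              φ a (HopfAlgebra.antipode (R := K) (rb'.left k) * rb'.right k)) *
            Coalgebra.counit (R := K) b) := by
        refine Finset.sum_congr rfl fun k _ => ?_
        calc
            ∑ l ∈ ra'.index, ∑ i ∈ rb.index,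
              Coalgebra.counit (R := K) (ra'.left l) * Coalgebra.counit (R := K) (ra'.right l) *
                  φ a (HopfAlgebra.antipode (R := K) (rb'.left k) * rb'.right k) *
                (Coalgebra.counit (R := K) (rb.left i) * Coalgebra.counit (R := K) (rb.right i))
          _ = ∑ l ∈ ra'.index,
                (Coalgebra.counit (R := K) (ra'.left l) *
                    Coalgebra.counit (R := K) (ra'.right l)) *
                  (φ a (HopfAlgebra.antipode (R := K) (rb'.left k) * rb'.right k) * Coalgebra.counit (R := K) b) := by
              refine Finset.sum_congr rfl fun l _ => ?_
              rw [← Finset.mul_sum, collapse_left rb (Coalgebra.counit (R := K))]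
              ring
          _ = Coalgebra.counit (R := K) a' *
                (φ a (HopfAlgebra.antipode (R := K) (rb'.left k) * rb'.right k) * Coalgebra.counit (R := K) b) := by
              rw [← Finset.sum_mul, collapse_left ra' (Coalgebra.counit (R := K))]
          _ = _ := by ring
    _ = (Coalgebra.counit (R := K) a' * (Coalgebra.counit (R := K) b' *
          Coalgebra.counit (R := K) a)) * Coalgebra.counit (R := K) b := by
        rw [← Finset.sum_mul, ← Finset.mul_sum, ← map_sum,
          HopfAlgebra.sum_antipode_mul_eq_smul rb', map_smul, hφ1, smul_eq_mul]
    _ = (Coalgebra.counit (R := K) b * Coalgebra.counit (R := K) a) *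
          (Coalgebra.counit (R := K) b' * Coalgebra.counit (R := K) a') := by ring

end Core

section MainProofs

variable {K A B : Type*} [Field K] [Ring A] [Ring B] [HopfAlgebra K A] [HopfAlgebra K B]

lemma main_cocycle
    (φ : A →ₗ[K] B →ₗ[K] K)
    (σ : (B ⊗[K] A) →ₗ[K] (B ⊗[K] A) →ₗ[K] K)
    (hσ : ∀ (b : B) (a : A) (b' : B) (a' : A),
      σ (b ⊗ₜ a) (b' ⊗ₜ a') =
        Coalgebra.counit (R := K) b * φ a b' * Coalgebra.counit (R := K) a')
    (h1R : ∀ (a : A) (b1 b2 : B), φ a (b1 * b2) =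
      ∑ j ∈ (ℛ K a).index, φ ((ℛ K a).left j) b1 * φ ((ℛ K a).right j) b2)
    (h2R : ∀ (x y : A) (c : B), φ (x * y) c =
      ∑ m ∈ (ℛ K c).index, φ x ((ℛ K c).right m) * φ y ((ℛ K c).left m)) :
    ∀ x y z : B ⊗[K] A,
      pairMul σ (mulPair σ.flip z) (Coalgebra.comul (R := K) x) (Coalgebra.comul (R := K) y) =
      pairMul σ (mulPair σ x) (Coalgebra.comul (R := K) y) (Coalgebra.comul (R := K) z) := by
  intro x y z
  induction x using TensorProduct.induction_on with
  | zero => simp only [map_zero, LinearMap.zero_apply, pairMul_zero_right]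
  | add x1 x2 hx1 hx2 => simp only [map_add, LinearMap.add_apply, pairMul_add_right, hx1, hx2]
  | tmul b a =>
    induction y using TensorProduct.induction_on with
    | zero => simp only [map_zero, LinearMap.zero_apply, pairMul_zero_right]
    | add y1 y2 hy1 hy2 => simp only [map_add, LinearMap.add_apply, hy1, hy2]
    | tmul b' a' =>
      induction z using TensorProduct.induction_on with
      | zero => simp only [map_zero, LinearMap.zero_apply, pairMul_zero_right]
      | add z1 z2 hz1 hz2 => simp only [map_add, LinearMap.add_apply, pairMul_add_right, hz1, hz2]
      | tmul b'' a'' =>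
        rw [core_left φ σ hσ b a b' a' b'' a'' (ℛ K b) (ℛ K a) (ℛ K b') (ℛ K a') (ℛ K b'')
            (h1R a) (fun x y => h2R x y b''),
          core_right φ σ hσ b a b' a' b'' a'' (ℛ K b') (ℛ K a') (ℛ K b'') (ℛ K a'')]

lemma main_inv1
    (φ : A →ₗ[K] B →ₗ[K] K)
    (σ σinv : (B ⊗[K] A) →ₗ[K] (B ⊗[K] A) →ₗ[K] K)
    (hσ : ∀ (b : B) (a : A) (b' : B) (a' : A),
      σ (b ⊗ₜ a) (b' ⊗ₜ a') =
        Coalgebra.counit (R := K) b * φ a b' * Coalgebra.counit (R := K) a')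
    (hσinv : ∀ (b : B) (a : A) (b' : B) (a' : A),
      σinv (b ⊗ₜ a) (b' ⊗ₜ a') =
        Coalgebra.counit (R := K) b * φ a (HopfAlgebra.antipode (R := K) b') *
          Coalgebra.counit (R := K) a')
    (hφ1 : ∀ x : A, φ x 1 = Coalgebra.counit (R := K) x)
    (h1R : ∀ (a : A) (b1 b2 : B), φ a (b1 * b2) =
      ∑ j ∈ (ℛ K a).index, φ ((ℛ K a).left j) b1 * φ ((ℛ K a).right j) b2) :
    ∀ x y : B ⊗[K] A,
      pairMul σ σinv (Coalgebra.comul (R := K) x) (Coalgebra.comul (R := K) y) =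
        Coalgebra.counit (R := K) x * Coalgebra.counit (R := K) y := by
  intro x y
  induction x using TensorProduct.induction_on with
  | zero => simp only [map_zero, LinearMap.zero_apply, zero_mul]
  | add x1 x2 hx1 hx2 =>
    simp only [map_add, LinearMap.add_apply, add_mul, hx1, hx2]
  | tmul b a =>
    induction y using TensorProduct.induction_on with
    | zero => simp only [map_zero, LinearMap.zero_apply, mul_zero]
    | add y1 y2 hy1 hy2 => simp only [map_add, LinearMap.add_apply, mul_add, hy1, hy2]
    | tmul b' a' =>
      rw [core_inv1 φ σ σinv hσ hσinv hφ1 b a b' a' (ℛ K b) (ℛ K a) (ℛ K b') (ℛ K a') (h1R a),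
        _root_.counit_tmul, _root_.counit_tmul]

lemma main_inv2
    (φ : A →ₗ[K] B →ₗ[K] K)
    (σ σinv : (B ⊗[K] A) →ₗ[K] (B ⊗[K] A) →ₗ[K] K)
    (hσ : ∀ (b : B) (a : A) (b' : B) (a' : A),
      σ (b ⊗ₜ a) (b' ⊗ₜ a') =
        Coalgebra.counit (R := K) b * φ a b' * Coalgebra.counit (R := K) a')
    (hσinv : ∀ (b : B) (a : A) (b' : B) (a' : A),
      σinv (b ⊗ₜ a) (b' ⊗ₜ a') =
        Coalgebra.counit (R := K) b * φ a (HopfAlgebra.antipode (R := K) b') *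
          Coalgebra.counit (R := K) a')
    (hφ1 : ∀ x : A, φ x 1 = Coalgebra.counit (R := K) x)
    (h1R : ∀ (a : A) (b1 b2 : B), φ a (b1 * b2) =
      ∑ j ∈ (ℛ K a).index, φ ((ℛ K a).left j) b1 * φ ((ℛ K a).right j) b2) :
    ∀ x y : B ⊗[K] A,
      pairMul σinv σ (Coalgebra.comul (R := K) x) (Coalgebra.comul (R := K) y) =
        Coalgebra.counit (R := K) x * Coalgebra.counit (R := K) y := by
  intro x y
  induction x using TensorProduct.induction_on with
  | zero => simp only [map_zero, LinearMap.zero_apply, zero_mul]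
  | add x1 x2 hx1 hx2 =>
    simp only [map_add, LinearMap.add_apply, add_mul, hx1, hx2]
  | tmul b a =>
    induction y using TensorProduct.induction_on with
    | zero => simp only [map_zero, LinearMap.zero_apply, mul_zero]
    | add y1 y2 hy1 hy2 => simp only [map_add, LinearMap.add_apply, mul_add, hy1, hy2]
    | tmul b' a' =>
      rw [core_inv2 φ σ σinv hσ hσinv hφ1 b a b' a' (ℛ K b) (ℛ K a) (ℛ K b') (ℛ K a') (h1R a),
        _root_.counit_tmul, _root_.counit_tmul]

end MainProofs

/-- Given a generalized Hopf pairing `φ` between Hopf algebras `A` and `B`, the bilinear form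
`σ(b⊗a, b'⊗a') = ε(b)·φ(a,b')·ε(a')` on the tensor product Hopf algebra `H = B ⊗ A` is a
convolution-invertible 2-cocycle, with convolution inverse
`σ⁻¹(b⊗a, b'⊗a') = ε(b)·φ(a,S(b'))·ε(a')`.  The 2-cocycle condition
`∑ σ(x₁,y₁)σ(x₂y₂,z) = ∑ σ(y₁,z₁)σ(x,y₂z₂)` and the convolution-inverse condition are
expressed via Sweedler representations. -/
theorem hopfPairing_twococycle {K A B : Type u} [Field K]
    [Ring A] [Ring B] [HopfAlgebra K A] [HopfAlgebra K B]
    (φ : A →ₗ[K] B →ₗ[K] K)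
    (h1 : ∀ (a : A) (b b' : B) (ι : Type _) (r : Coalgebra.Repr K a ι),
      φ a (b * b') = ∑ i ∈ r.index, φ (r.left i) b * φ (r.right i) b')
    (h2 : ∀ (a a' : A) (b : B) (ι : Type _) (r : Coalgebra.Repr K b ι),
      φ (a * a') b = ∑ i ∈ r.index, φ a (r.right i) * φ a' (r.left i))
    (h3 : ∀ a : A, φ a 1 = Coalgebra.counit (R := K) a)
    (h4 : ∀ b : B, φ 1 b = Coalgebra.counit (R := K) b)
    (σ σinv : (B ⊗[K] A) →ₗ[K] (B ⊗[K] A) →ₗ[K] K)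
    (hσ : ∀ (b : B) (a : A) (b' : B) (a' : A),
      σ (b ⊗ₜ a) (b' ⊗ₜ a') =
        Coalgebra.counit (R := K) b * φ a b' * Coalgebra.counit (R := K) a')
    (hσinv : ∀ (b : B) (a : A) (b' : B) (a' : A),
      σinv (b ⊗ₜ a) (b' ⊗ₜ a') =
        Coalgebra.counit (R := K) b * φ a (HopfAlgebra.antipode (R := K) b') *
          Coalgebra.counit (R := K) a') :
    -- 2-cocycle condition
    (∀ (x y z : B ⊗[K] A) (ιx ιy ιz : Type _) (rx : Coalgebra.Repr K x ιx)
        (ry : Coalgebra.Repr K y ιy) (rz : Coalgebra.Repr K z ιz),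
      ∑ i ∈ rx.index, ∑ j ∈ ry.index,
          σ (rx.left i) (ry.left j) * σ (rx.right i * ry.right j) z =
        ∑ j ∈ ry.index, ∑ l ∈ rz.index,
          σ (ry.left j) (rz.left l) * σ x (ry.right j * rz.right l)) ∧
    -- convolution invertibility: σ * σ⁻¹ = ε = σ⁻¹ * σ on H ⊗ H
    (∀ (x y : B ⊗[K] A) (ιx ιy : Type _) (rx : Coalgebra.Repr K x ιx) (ry : Coalgebra.Repr K y ιy),
      (∑ i ∈ rx.index, ∑ j ∈ ry.index,
          σ (rx.left i) (ry.left j) * σinv (rx.right i) (ry.right j) =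
        Coalgebra.counit (R := K) x * Coalgebra.counit (R := K) y) ∧
      (∑ i ∈ rx.index, ∑ j ∈ ry.index,
          σinv (rx.left i) (ry.left j) * σ (rx.right i) (ry.right j) =
        Coalgebra.counit (R := K) x * Coalgebra.counit (R := K) y)) := by
  have h1R : ∀ (a : A) (b1 b2 : B), φ a (b1 * b2) =
      ∑ j ∈ (ℛ K a).index, φ ((ℛ K a).left j) b1 * φ ((ℛ K a).right j) b2 := by
    intro a b1 b2
    rw [h1 a b1 b2 _ (reprSmall a)]
    have e1 := sum_repr_eq_lift ((LinearMap.mul K K).compl₁₂ (φ.flip b1) (φ.flip b2))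
      (reprSmall (K := K) a)
    have e2 := sum_repr_eq_lift ((LinearMap.mul K K).compl₁₂ (φ.flip b1) (φ.flip b2)) (ℛ K a)
    simp only [LinearMap.compl₁₂_apply, LinearMap.flip_apply, LinearMap.mul_apply'] at e1 e2
    rw [e1, e2]
  have h2R : ∀ (x y : A) (c : B), φ (x * y) c =
      ∑ m ∈ (ℛ K c).index, φ x ((ℛ K c).right m) * φ y ((ℛ K c).left m) := by
    intro x y c
    rw [h2 x y c _ (reprSmall c)]
    have e1 := sum_repr_eq_lift (((LinearMap.mul K K).compl₁₂ (φ x) (φ y)).flip)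
      (reprSmall (K := K) c)
    have e2 := sum_repr_eq_lift (((LinearMap.mul K K).compl₁₂ (φ x) (φ y)).flip) (ℛ K c)
    simp only [LinearMap.flip_apply, LinearMap.compl₁₂_apply, LinearMap.mul_apply'] at e1 e2
    rw [e1, e2]
  refine ⟨?_, ?_⟩
  · intro x y z ιx ιy ιz rx ry rz
    have e1 : ∑ i ∈ rx.index, ∑ j ∈ ry.index,
        σ (rx.left i) (ry.left j) * σ (rx.right i * ry.right j) z =
        pairMul σ (mulPair σ.flip z) (Coalgebra.comul (R := K) x) (Coalgebra.comul (R := K) y) := by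
      rw [apply_comul₂ rx ry (pairMul σ (mulPair σ.flip z))]
      simp only [pairMul_apply, mulPair_apply, LinearMap.flip_apply]
    have e2 : ∑ j ∈ ry.index, ∑ l ∈ rz.index,
        σ (ry.left j) (rz.left l) * σ x (ry.right j * rz.right l) =
        pairMul σ (mulPair σ x) (Coalgebra.comul (R := K) y) (Coalgebra.comul (R := K) z) := by
      rw [apply_comul₂ ry rz (pairMul σ (mulPair σ x))]
      simp only [pairMul_apply, mulPair_apply]
    rw [e1, e2]
    exact main_cocycle φ σ hσ h1R h2R x y z
  · intro x y ιx ιy rx ry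
    constructor
    · have e : ∑ i ∈ rx.index, ∑ j ∈ ry.index,
          σ (rx.left i) (ry.left j) * σinv (rx.right i) (ry.right j) =
          pairMul σ σinv (Coalgebra.comul (R := K) x) (Coalgebra.comul (R := K) y) := by
        rw [apply_comul₂ rx ry (pairMul σ σinv)]
        simp only [pairMul_apply]
      rw [e]
      exact main_inv1 φ σ σinv hσ hσinv h3 h1R x y
    · have e : ∑ i ∈ rx.index, ∑ j ∈ ry.index,
          σinv (rx.left i) (ry.left j) * σ (rx.right i) (ry.right j) =
          pairMul σinv σ (Coalgebra.comul (R := K) x) (Coalgebra.comul (R := K) y) := by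
        rw [apply_comul₂ rx ry (pairMul σinv σ)]
        simp only [pairMul_apply]
      rw [e]
      exact main_inv2 φ σ σinv hσ hσinv h3 h1R x y
end

section
/- Let M be a module over the q-Weyl algebra W_q(sl_2) (relation e·f = q^{-2}fe + 1) on which e acts locally nilpotently. Then the operator P = ∑_{n=0}^{∞} (-1)^n · q^{-n(n-1)/2} · (f^n/[n]!) · e^n is well-defined on M, and for every m ∈ M, e·P(m) = 0; moreover P(m) = m whenever e·m = 0. In particular P is an idempotent projection onto the kernel of e. -/
open Finset

/-- The q-integer `[n] = (q^n - q^{-n})/(q - q^{-1})`. -/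
noncomputable def qInt (q : ℂ) (n : ℕ) : ℂ := (q ^ n - q⁻¹ ^ n) / (q - q⁻¹)

/-- The q-factorial `[n]! = ∏_{i=1}^n [i]`. -/
noncomputable def qFact (q : ℂ) (n : ℕ) : ℂ := ∏ i ∈ Finset.range n, qInt q (i + 1)

/-- The q-binomial coefficient `[n choose k] = [n]!/([k]![n-k]!)`. -/
noncomputable def qBinom (q : ℂ) (n k : ℕ) : ℂ := qFact q n / (qFact q k * qFact q (n - k))


section Aux
variable {q : ℂ} (hq0 : q ≠ 0) (hq : ∀ n : ℕ, 0 < n → q ^ n ≠ 1)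

lemma zpow_neg_nat' (n : ℕ) : q ^ (-(n:ℤ)) = q⁻¹ ^ n := by
  rw [zpow_neg, zpow_natCast, inv_pow]

include hq0 hq in
lemma sub_inv_ne' : q - q⁻¹ ≠ 0 := by
  intro h
  apply hq 2 (by norm_num)
  have hqq : q = q⁻¹ := sub_eq_zero.mp h
  calc q ^ 2 = q * q := sq q
    _ = q * q⁻¹ := by rw [← hqq]
    _ = 1 := mul_inv_cancel₀ hq0

include hq0 hq in
lemma qInt_ne' (n : ℕ) : qInt q (n + 1) ≠ 0 := by
  unfold qInt
  apply div_ne_zero _ (sub_inv_ne' hq0 hq)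
  intro h
  have h1 : q ^ (n + 1) = q⁻¹ ^ (n + 1) := sub_eq_zero.mp h
  apply hq (2 * (n + 1)) (by omega)
  have h2 : q ^ (2 * (n+1)) = q ^ (n+1) * q ^ (n+1) := by ring
  rw [h2]
  nth_rewrite 2 [h1]
  rw [← mul_pow, mul_inv_cancel₀ hq0, one_pow]

include hq0 hq in
lemma qFact_ne' (n : ℕ) : qFact q n ≠ 0 :=
  Finset.prod_ne_zero_iff.mpr fun i _ => qInt_ne' hq0 hq i

lemma tri_succ (k : ℕ) : (k+1) * ((k+1) - 1) / 2 = k * (k-1)/2 + k := by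
  have h1 := Finset.sum_range_id (k+1)
  have h2 := Finset.sum_range_id k
  rw [Finset.sum_range_succ, h2] at h1
  omega

set_option maxHeartbeats 1000000 in
include hq0 hq in
lemma coeff_rec' (k : ℕ) :
    ((-1 : ℂ) ^ (k+1) * q⁻¹ ^ ((k+1) * ((k+1) - 1) / 2) / qFact q (k+1))
      * (q⁻¹ ^ k * qInt q (k+1)) =
    -(((-1 : ℂ) ^ k * q⁻¹ ^ (k * (k - 1) / 2) / qFact q k) * q⁻¹ ^ (2*k)) := by
  have hf : qFact q (k+1) = qFact q k * qInt q (k+1) := Finset.prod_range_succ _ _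
  rw [tri_succ k, hf, pow_add]
  have hFk := qFact_ne' hq0 hq k
  have hIk := qInt_ne' hq0 hq k
  have hp : ∀ t : ℕ, q ^ t ≠ 0 := fun t => pow_ne_zero t hq0
  simp only [inv_pow]
  field_simp
  ring

set_option maxHeartbeats 1000000 in
include hq0 hq in
lemma qInt_step (k : ℕ) :
    q⁻¹ ^ (2*(k+1)) + q⁻¹ ^ k * qInt q (k+1) = q⁻¹ ^ (k+1) * qInt q (k+2) := by
  have hq2 := sub_inv_ne' hq0 hq
  have hr : q⁻¹ * q = 1 := inv_mul_cancel₀ hq0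
  have hint : ∀ n : ℕ, qInt q n * (q - q⁻¹) = q ^ n - q⁻¹ ^ n :=
    fun n => div_mul_cancel₀ _ hq2
  apply mul_right_cancel₀ hq2
  rw [add_mul, mul_assoc, mul_assoc, hint, hint]
  linear_combination (q⁻¹ ^ (2*k+1) - q⁻¹ ^ k * q ^ (k+1)) * hr

include hq0 hq in
lemma comm_pow {M : Type*} [AddCommGroup M] [Module ℂ M]
    (E F : Module.End ℂ M)
    (hrel : E * F = (q ^ (-2 : ℤ)) • (F * E) + 1) (k : ℕ) :
    E * F ^ (k+1) = (q⁻¹ ^ (2*(k+1))) • (F ^ (k+1) * E)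
      + (q⁻¹ ^ k * qInt q (k+1)) • F ^ k := by
  have hq2 := sub_inv_ne' hq0 hq
  have hrel' : E * F = (q⁻¹ ^ 2) • (F * E) + 1 := by
    rw [hrel, show (q : ℂ) ^ (-2:ℤ) = q⁻¹ ^ 2 by
      rw [show (-2:ℤ) = -((2:ℕ):ℤ) by norm_num, zpow_neg_nat']]
  induction k with
  | zero =>
    have h1 : qInt q 1 = 1 := by
      unfold qInt
      rw [pow_one, pow_one, div_self hq2]
    simpa [h1] using hrel'
  | succ k ih =>
    calc E * F ^ (k+2) = (E * F ^ (k+1)) * F := by rw [mul_assoc, ← pow_succ]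
      _ = ((q⁻¹ ^ (2*(k+1))) • (F ^ (k+1) * E) + (q⁻¹ ^ k * qInt q (k+1)) • F ^ k) * F := by
          rw [ih]
      _ = (q⁻¹ ^ (2*(k+1))) • (F ^ (k+1) * (E * F))
            + (q⁻¹ ^ k * qInt q (k+1)) • F ^ (k+1) := by
          rw [add_mul, smul_mul_assoc, smul_mul_assoc, mul_assoc, ← pow_succ]
      _ = (q⁻¹ ^ (2*(k+1))) • ((q⁻¹ ^ 2) • (F ^ (k+2) * E) + F ^ (k+1))
            + (q⁻¹ ^ k * qInt q (k+1)) • F ^ (k+1) := by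
          rw [hrel', mul_add (F ^ (k+1)), mul_one, mul_smul_comm, ← mul_assoc, ← pow_succ]
      _ = (q⁻¹ ^ (2*(k+1)) * q⁻¹ ^ 2) • (F ^ (k+2) * E)
            + (q⁻¹ ^ (2*(k+1)) + q⁻¹ ^ k * qInt q (k+1)) • F ^ (k+1) := by
          rw [smul_add, smul_smul, add_smul, add_assoc]
      _ = (q⁻¹ ^ (2*(k+1+1))) • (F ^ (k+1+1) * E)
            + (q⁻¹ ^ (k+1) * qInt q (k+1+1)) • F ^ (k+1) := by
          rw [qInt_step hq0 hq k, ← pow_add,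
            show 2*(k+1) + 2 = 2*(k+1+1) from by ring]

/-- Auxiliary telescoping sequence. -/
noncomputable def Haux (q : ℂ) {M : Type*} [AddCommGroup M] [Module ℂ M]
    (E F : Module.End ℂ M) (m : M) : ℕ → M
  | 0 => 0
  | (k+1) => (((-1 : ℂ) ^ k * q⁻¹ ^ (k * (k - 1) / 2) / qFact q k) * q⁻¹ ^ (2*k)) •
      (F ^ k) ((E ^ (k+1)) m)

end Aux

/-- On a `W_q(sl₂)`-module `M` (operators `E`, `F` with `E∘F = q⁻²·F∘E + 1`) on which `E` acts
locally nilpotently, the operator `P = ∑ₙ (-1)ⁿ q^{-n(n-1)/2} (Fⁿ/[n]!) Eⁿ` is well defined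
(the truncated sums are independent of the truncation point), `E·P(m) = 0` for all `m`, and
`P(m) = m` whenever `E·m = 0`; so `P` is an idempotent projection onto `ker E`. -/
theorem extremal_projector (q : ℂ) (hq0 : q ≠ 0) (hq : ∀ n : ℕ, 0 < n → q ^ n ≠ 1)
    {M : Type*} [AddCommGroup M] [Module ℂ M]
    (E F : Module.End ℂ M)
    (hrel : E * F = (q ^ (-2 : ℤ)) • (F * E) + 1)
    (hnil : ∀ m : M, ∃ l : ℕ, (E ^ l) m = 0) :
    -- well-definedness: the truncated sums agree
    (∀ (m : M) (l l' : ℕ), (E ^ l) m = 0 → (E ^ l') m = 0 →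
      (∑ n ∈ Finset.range l,
          ((-1 : ℂ) ^ n * q ^ (-((n * (n - 1) / 2 : ℕ) : ℤ)) / qFact q n) •
            (F ^ n) ((E ^ n) m)) =
        ∑ n ∈ Finset.range l',
          ((-1 : ℂ) ^ n * q ^ (-((n * (n - 1) / 2 : ℕ) : ℤ)) / qFact q n) •
            (F ^ n) ((E ^ n) m)) ∧
    -- `E · P(m) = 0`
    (∀ (m : M) (l : ℕ), (E ^ l) m = 0 →
      E (∑ n ∈ Finset.range l,
          ((-1 : ℂ) ^ n * q ^ (-((n * (n - 1) / 2 : ℕ) : ℤ)) / qFact q n) •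
            (F ^ n) ((E ^ n) m)) = 0) ∧
    -- `P(m) = m` whenever `E·m = 0`
    (∀ (m : M) (l : ℕ), (E ^ l) m = 0 → E m = 0 →
      (∑ n ∈ Finset.range l,
          ((-1 : ℂ) ^ n * q ^ (-((n * (n - 1) / 2 : ℕ) : ℤ)) / qFact q n) •
            (F ^ n) ((E ^ n) m)) = m) := by
  have hEn : ∀ (m : M) (l n : ℕ), (E ^ l) m = 0 → l ≤ n → (E ^ n) m = 0 := by
    intro m l n h hle
    have hn : n = (n - l) + l := by omega
    rw [hn, pow_add, Module.End.mul_apply, h, map_zero]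
  have key1 : ∀ (m : M) (l l' : ℕ), l ≤ l' → (E ^ l) m = 0 →
      (∑ n ∈ Finset.range l,
          ((-1 : ℂ) ^ n * q ^ (-((n * (n - 1) / 2 : ℕ) : ℤ)) / qFact q n) •
            (F ^ n) ((E ^ n) m)) =
        ∑ n ∈ Finset.range l',
          ((-1 : ℂ) ^ n * q ^ (-((n * (n - 1) / 2 : ℕ) : ℤ)) / qFact q n) •
            (F ^ n) ((E ^ n) m) := by
    intro m l l' hle h
    apply Finset.sum_subset (Finset.range_subset_range.mpr hle)
    intro n _ hn
    rw [hEn m l n h (by simpa using hn), map_zero, smul_zero]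
  refine ⟨?_, ?_, ?_⟩
  · intro m l l' h h'
    rcases le_total l l' with hle | hle
    · exact key1 m l l' hle h
    · exact (key1 m l' l hle h').symm
  · -- E ∘ P = 0
    intro m l hm
    simp only [zpow_neg_nat']
    rw [map_sum]
    simp only [map_smul]
    have step : ∀ n : ℕ,
        ((-1 : ℂ) ^ n * q⁻¹ ^ (n * (n - 1) / 2) / qFact q n) • E ((F ^ n) ((E ^ n) m))
          = Haux q E F m (n+1) - Haux q E F m n := by
      intro n
      cases n with
      | zero =>
        simp only [Haux, sub_zero, pow_zero, pow_one, mul_one, Nat.zero_mul, Nat.zero_div,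
          mul_zero, Module.End.one_apply]
        norm_num
      | succ k =>
        have h1 : E ((F ^ (k+1)) ((E ^ (k+1)) m)) = (E * F ^ (k+1)) ((E ^ (k+1)) m) := rfl
        rw [h1, comm_pow hq0 hq E F hrel k]
        rw [LinearMap.add_apply, LinearMap.smul_apply, LinearMap.smul_apply,
          Module.End.mul_apply]
        have h2 : E ((E ^ (k+1)) m) = (E ^ (k+2)) m := by
          rw [show (E : Module.End ℂ M) ^ (k+2) = E * E ^ (k+1) from pow_succ' E (k+1),
            Module.End.mul_apply]
        rw [h2, smul_add, smul_smul, smul_smul]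
        simp only [Haux]
        rw [coeff_rec' hq0 hq k, neg_smul, ← sub_eq_add_neg]
    calc (∑ n ∈ Finset.range l,
        ((-1 : ℂ) ^ n * q⁻¹ ^ (n * (n - 1) / 2) / qFact q n) • E ((F ^ n) ((E ^ n) m)))
        = ∑ n ∈ Finset.range l, (Haux q E F m (n+1) - Haux q E F m n) :=
          Finset.sum_congr rfl fun n _ => step n
      _ = Haux q E F m l - Haux q E F m 0 := Finset.sum_range_sub (Haux q E F m) l
      _ = 0 := by
          cases l with
          | zero => simp [Haux]
          | succ k =>
            simp only [Haux, hm, map_zero, smul_zero, sub_zero]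
  · -- P m = m when E m = 0
    intro m l hm hEm
    cases l with
    | zero =>
      rw [Finset.range_zero, Finset.sum_empty]
      simpa using hm.symm
    | succ k =>
      rw [Finset.sum_eq_single_of_mem 0 (Finset.mem_range.mpr k.succ_pos) ?_]
      · norm_num [qFact]
      · intro n _ hn
        obtain ⟨j, rfl⟩ := Nat.exists_eq_succ_of_ne_zero hn
        have hz : (E ^ (j+1)) m = 0 := by
          rw [pow_succ, Module.End.mul_apply, hEm, map_zero]
        rw [hz, map_zero, smul_zero]
end

section
/- Let M be a W_q(sl_2)-module on which e acts locally nilpotently. Then the multiplication map C[f] ⊗ K(M) → M, f^n ⊗ v ↦ f^n·v, is a linear isomorphism, where K(M) = {v ∈ M : e·v = 0} is the space of maximal vectors. In particular M is a free C[f]-module with basis any basis of K(M). -/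
open TensorProduct Polynomial

section Aux

variable {M : Type} [AddCommGroup M] [Module ℂ M]

noncomputable def wqb (t : ℂ) (n : ℕ) : ℂ := ∑ i ∈ Finset.range n, t ^ i

lemma wqb_succ (t : ℂ) (n : ℕ) : wqb t (n + 1) = t * wqb t n + 1 := by
  simp [wqb, Finset.mul_sum, Finset.sum_range_succ', pow_succ, mul_comm]

lemma wqb_ne_zero {t : ℂ} (ht : ∀ n : ℕ, 0 < n → t ^ n ≠ 1) {n : ℕ} (hn : 0 < n) :
    wqb t n ≠ 0 := by
  intro h
  have hg := geom_sum_mul t n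
  rw [show (∑ i ∈ Finset.range n, t ^ i) = wqb t n from rfl, h, zero_mul] at hg
  exact ht n hn (by linear_combination -hg)

lemma wq_EFpow (q : ℂ) (E F : Module.End ℂ M)
    (hrel : E * F = (q ^ (-2 : ℤ)) • (F * E) + 1) (n : ℕ) :
    E * F ^ (n + 1) = ((q ^ (-2 : ℤ)) ^ (n + 1)) • (F ^ (n + 1) * E)
      + (wqb (q ^ (-2 : ℤ)) (n + 1)) • F ^ n := by
  set t := q ^ (-2 : ℤ) with ht
  induction n with
  | zero => simpa [wqb] using hrel
  | succ n ih =>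
      have h1 : E * F ^ (n + 2) = (E * F) * F ^ (n + 1) := by
        rw [mul_assoc, ← pow_succ']
      rw [h1, hrel, add_mul, one_mul, smul_mul_assoc, mul_assoc, ih, wqb_succ]
      rw [show wqb t (n + 1 + 1) = t * (t * wqb t n + 1) + 1 by rw [wqb_succ, wqb_succ]]
      simp only [mul_add, mul_smul_comm, smul_smul, smul_add, ← mul_assoc, ← pow_succ']
      module

end Aux

section Aux2

variable {M : Type} [AddCommGroup M] [Module ℂ M] (q : ℂ) (E F : Module.End ℂ M)
  (hrel : E * F = (q ^ (-2 : ℤ)) • (F * E) + 1)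

include hrel

lemma wq_EFv {v : M} (hv : E v = 0) (n : ℕ) :
    E ((F ^ (n + 1)) v) = wqb (q ^ (-2 : ℤ)) (n + 1) • (F ^ n) v := by
  have h := congrArg (fun (T : Module.End ℂ M) => T v) (wq_EFpow q E F hrel n)
  simpa [Module.End.mul_apply, hv] using h

lemma wq_Ehigh {v : M} (hv : E v = 0) (n : ℕ) : (E ^ (n + 1)) ((F ^ n) v) = 0 := by
  induction n with
  | zero => simpa using hv
  | succ n ih =>
      have h1 : (E ^ (n + 2)) ((F ^ (n + 1)) v) = (E ^ (n + 1)) (E ((F ^ (n + 1)) v)) := by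
        rw [pow_succ, Module.End.mul_apply]
      rw [h1, wq_EFv q E F hrel hv, map_smul, ih, smul_zero]

lemma wq_Egt {v : M} (hv : E v = 0) {n k : ℕ} (h : n < k) : (E ^ k) ((F ^ n) v) = 0 := by
  have hk : k = (k - (n + 1)) + (n + 1) := by omega
  rw [hk, pow_add, Module.End.mul_apply, wq_Ehigh q E F hrel hv, map_zero]

lemma wq_Ediag {v : M} (hv : E v = 0) (n : ℕ) :
    (E ^ n) ((F ^ n) v) = (∏ k ∈ Finset.range n, wqb (q ^ (-2 : ℤ)) (k + 1)) • v := by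
  induction n with
  | zero => simp
  | succ n ih =>
      have h1 : (E ^ (n + 1)) ((F ^ (n + 1)) v) = (E ^ n) (E ((F ^ (n + 1)) v)) := by
        rw [pow_succ, Module.End.mul_apply]
      rw [h1, wq_EFv q E F hrel hv, map_smul, ih, Finset.prod_range_succ, smul_smul,
        mul_comm]

end Aux2

noncomputable def wqPhi {M : Type} [AddCommGroup M] [Module ℂ M] (E F : Module.End ℂ M) :
    (ℕ →₀ ↥(LinearMap.ker E)) →ₗ[ℂ] M :=
  Finsupp.lsum ℂ fun n => (F ^ n) ∘ₗ (LinearMap.ker E).subtype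

lemma wqPhi_single {M : Type} [AddCommGroup M] [Module ℂ M] (E F : Module.End ℂ M)
    (n : ℕ) (v : ↥(LinearMap.ker E)) :
    wqPhi E F (Finsupp.single n v) = (F ^ n) (v : M) := by
  simp [wqPhi]

lemma wqPhi_apply {M : Type} [AddCommGroup M] [Module ℂ M] (E F : Module.End ℂ M)
    (g : ℕ →₀ ↥(LinearMap.ker E)) :
    wqPhi E F g = g.sum fun n v => (F ^ n) (v : M) := by
  simp [wqPhi, Finsupp.lsum_apply, Finsupp.sum]

lemma wqPhi_inj {M : Type} [AddCommGroup M] [Module ℂ M] (q : ℂ) (E F : Module.End ℂ M)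
    (hrel : E * F = (q ^ (-2 : ℤ)) • (F * E) + 1)
    (ht : ∀ n : ℕ, 0 < n → (q ^ (-2 : ℤ)) ^ n ≠ 1)
    (g : ℕ →₀ ↥(LinearMap.ker E)) (hg : wqPhi E F g = 0) : g = 0 := by
  by_contra hne
  have hsupp : g.support.Nonempty := Finsupp.support_nonempty_iff.mpr hne
  set N := g.support.max' hsupp with hN
  have hNmem : N ∈ g.support := g.support.max'_mem hsupp
  have h0 : (E ^ N) (wqPhi E F g) = 0 := by rw [hg, map_zero]
  rw [wqPhi_apply, Finsupp.sum, map_sum] at h0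
  have hsum : ∑ n ∈ g.support, (E ^ N) ((F ^ n) ((g n : M)))
      = (E ^ N) ((F ^ N) ((g N : M))) := by
    refine Finset.sum_eq_single_of_mem N hNmem ?_
    intro b hb hbN
    have hlt : b < N := lt_of_le_of_ne (g.support.le_max' b hb) hbN
    exact wq_Egt q E F hrel (LinearMap.mem_ker.mp (g b).2) hlt
  rw [hsum, wq_Ediag q E F hrel (LinearMap.mem_ker.mp (g N).2)] at h0
  have hc : (∏ k ∈ Finset.range N, wqb (q ^ (-2 : ℤ)) (k + 1)) ≠ 0 :=
    Finset.prod_ne_zero_iff.mpr fun k _ => wqb_ne_zero ht (Nat.succ_pos k)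
  have : (g N : M) = 0 := (smul_eq_zero.mp h0).resolve_left hc
  exact (Finsupp.mem_support_iff.mp hNmem) (Subtype.ext this)

lemma wqPhi_surj {M : Type} [AddCommGroup M] [Module ℂ M] (q : ℂ) (E F : Module.End ℂ M)
    (hrel : E * F = (q ^ (-2 : ℤ)) • (F * E) + 1)
    (ht : ∀ n : ℕ, 0 < n → (q ^ (-2 : ℤ)) ^ n ≠ 1)
    (l : ℕ) (m : M) (hm : (E ^ l) m = 0) : m ∈ LinearMap.range (wqPhi E F) := by
  induction l generalizing m with
  | zero =>
      simp only [pow_zero, Module.End.one_apply] at hm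
      rw [hm]; exact zero_mem _
  | succ l ih =>
      have hEm : (E ^ l) (E m) = 0 := by
        rw [← Module.End.mul_apply, ← pow_succ, hm]
      obtain ⟨g, hg⟩ := ih (E m) hEm
      set g' : ℕ →₀ ↥(LinearMap.ker E) :=
        g.sum fun n v => Finsupp.single (n + 1) ((wqb (q ^ (-2 : ℤ)) (n + 1))⁻¹ • v) with hg'
      have key : E (wqPhi E F g') = E m := by
        rw [hg', map_finsuppSum, map_finsuppSum, ← hg, wqPhi_apply]
        refine Finsupp.sum_congr fun n hn => ?_
        rw [wqPhi_single]
        have hv : E ((g n : M)) = 0 := LinearMap.mem_ker.mp (g n).2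
        rw [Submodule.coe_smul, map_smul, map_smul, wq_EFv q E F hrel hv, smul_smul,
          inv_mul_cancel₀ (wqb_ne_zero ht (Nat.succ_pos n)), one_smul]
      have hker : m - wqPhi E F g' ∈ LinearMap.ker E := by
        rw [LinearMap.mem_ker, map_sub, key, sub_self]
      refine ⟨g' + Finsupp.single 0 ⟨m - wqPhi E F g', hker⟩, ?_⟩
      rw [map_add, wqPhi_single]
      simp

noncomputable def wqPsi {M : Type} [AddCommGroup M] [Module ℂ M] (E : Module.End ℂ M) :
    (ℕ →₀ ↥(LinearMap.ker E)) →ₗ[ℂ] ℂ[X] ⊗[ℂ] ↥(LinearMap.ker E) :=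
  Finsupp.lsum ℂ fun n => (TensorProduct.mk ℂ ℂ[X] ↥(LinearMap.ker E)) (X ^ n)

lemma wqPsi_single {M : Type} [AddCommGroup M] [Module ℂ M] (E : Module.End ℂ M)
    (n : ℕ) (v : ↥(LinearMap.ker E)) :
    wqPsi E (Finsupp.single n v) = (X ^ n) ⊗ₜ[ℂ] v := by
  simp [wqPsi]

lemma wqPsi_surj {M : Type} [AddCommGroup M] [Module ℂ M] (E : Module.End ℂ M) :
    Function.Surjective (wqPsi E) := by
  rw [← LinearMap.range_eq_top, ← top_le_iff, ← TensorProduct.span_tmul_eq_top]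
  rw [Submodule.span_le]
  rintro _ ⟨p, v, rfl⟩
  induction p using Polynomial.induction_on' with
  | add p r hp hr => rw [TensorProduct.add_tmul]; exact add_mem hp hr
  | monomial n a =>
      refine ⟨Finsupp.single n (a • v), ?_⟩
      rw [wqPsi_single, ← Polynomial.smul_X_eq_monomial, TensorProduct.smul_tmul]

/-- For a `W_q(sl₂)`-module `M` (operators `E`, `F` with `E∘F = q⁻²·F∘E + 1`) on which `E`
acts locally nilpotently, the multiplication map `ℂ[f] ⊗ K(M) → M`, `fⁿ ⊗ v ↦ fⁿ·v`
(`K(M) = ker E` the space of maximal vectors), is a linear isomorphism. -/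
theorem Wq_module_free_over_maximal_vectors (q : ℂ) (hq0 : q ≠ 0)
    (hq : ∀ n : ℕ, 0 < n → q ^ n ≠ 1)
    {M : Type} [AddCommGroup M] [Module ℂ M]
    (E F : Module.End ℂ M)
    (hrel : E * F = (q ^ (-2 : ℤ)) • (F * E) + 1)
    (hnil : ∀ m : M, ∃ l : ℕ, (E ^ l) m = 0) :
    Function.Bijective
      (TensorProduct.lift
        (((LinearMap.llcomp ℂ ↥(LinearMap.ker E) M M).flip (LinearMap.ker E).subtype) ∘ₗ
          (Polynomial.aeval F).toLinearMap) :
        ℂ[X] ⊗[ℂ] ↥(LinearMap.ker E) → M) := by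
  have ht : ∀ n : ℕ, 0 < n → (q ^ (-2 : ℤ)) ^ n ≠ 1 := by
    intro n hn h
    have h2 : q ^ (-2 : ℤ) = (q ^ (2 : ℕ))⁻¹ := by
      rw [zpow_neg]; norm_cast
    rw [h2, inv_pow, ← pow_mul, inv_eq_one] at h
    exact hq (2 * n) (by omega) h
  set L : ℂ[X] ⊗[ℂ] ↥(LinearMap.ker E) →ₗ[ℂ] M :=
    TensorProduct.lift
      (((LinearMap.llcomp ℂ ↥(LinearMap.ker E) M M).flip (LinearMap.ker E).subtype) ∘ₗ
        (Polynomial.aeval F).toLinearMap) with hL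
  have hcomp : L ∘ₗ wqPsi E = wqPhi E F := by
    apply Finsupp.lhom_ext
    intro n v
    rw [LinearMap.comp_apply, wqPsi_single, wqPhi_single, hL]
    simp [map_pow]
  constructor
  · intro x y hxy
    obtain ⟨g, hg⟩ := wqPsi_surj E (x - y)
    have h0 : wqPhi E F g = 0 := by
      rw [← hcomp, LinearMap.comp_apply, hg, map_sub, sub_eq_zero]
      exact hxy
    have := wqPhi_inj q E F hrel ht g h0
    rw [this, map_zero] at hg
    exact sub_eq_zero.mp hg.symm
  · intro m
    obtain ⟨l, hl⟩ := hnil m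
    obtain ⟨g, hg⟩ := wqPhi_surj q E F hrel ht l m hl
    exact ⟨wqPsi E g, by rw [← hg, ← LinearMap.comp_apply, hcomp]⟩
end

section
/- Let M be a W_q(sl_2)-module with e acting locally nilpotently, such that the space of maximal vectors K(M) = {v : e·v = 0} is one-dimensional. Then M is a simple W_q(sl_2)-module, isomorphic to the module C[f] on which f acts by multiplication and e acts by the q-derivation e·f^n = q^{-(n-1)}[n]·f^{n-1}. -/
open Finset

open Polynomial

namespace WqAux

noncomputable def qA (q : ℂ) (n : ℕ) : ℂ := q ^ (-((n : ℤ) - 1)) * qInt q n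

lemma qsub_ne (q : ℂ) (hq0 : q ≠ 0) (h2 : q ^ 2 ≠ 1) : q - q⁻¹ ≠ 0 := by
  intro h
  apply h2
  have : q * (q - q⁻¹) = q ^ 2 - 1 := by field_simp
  rw [h, mul_zero] at this
  linear_combination -this

lemma qA_eq (q : ℂ) (hq0 : q ≠ 0) (h2 : q ^ 2 ≠ 1) (n : ℕ) :
    qA q n = (q - q ^ (1 - 2 * (n : ℤ))) / (q - q⁻¹) := by
  have hs := qsub_ne q hq0 h2
  unfold qA qInt
  rw [mul_div_assoc']
  congr 1
  rw [inv_pow, ← zpow_natCast q n, ← zpow_neg]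
  rw [mul_sub, ← zpow_add₀ hq0, ← zpow_add₀ hq0,
    show -((n:ℤ)-1)+(n:ℤ) = 1 by ring, show -((n:ℤ)-1)+(-(n:ℤ)) = 1-2*(n:ℤ) by ring, zpow_one]

lemma qA_rec (q : ℂ) (hq0 : q ≠ 0) (h2 : q ^ 2 ≠ 1) (n : ℕ) :
    qA q (n + 1) = qA q n + q ^ (-2 * (n : ℤ)) := by
  have hs := qsub_ne q hq0 h2
  rw [qA_eq q hq0 h2, qA_eq q hq0 h2]
  rw [div_add' _ _ _ hs]
  congr 1
  push_cast
  have : (1 : ℤ) - 2 * ((n : ℤ) + 1) = (-2 * n) + (-1) := by ring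
  rw [this, zpow_add₀ hq0, show (1:ℤ) - 2*(n:ℤ) = (-2*n) + 1 by ring, zpow_add₀ hq0]
  rw [mul_sub]
  rw [zpow_neg_one, zpow_one]
  ring

lemma qA_ne (q : ℂ) (hq0 : q ≠ 0) (hq : ∀ n : ℕ, 0 < n → q ^ n ≠ 1) (n : ℕ) (hn : 0 < n) :
    qA q n ≠ 0 := by
  have h2 : q ^ 2 ≠ 1 := hq 2 (by norm_num)
  have hs := qsub_ne q hq0 h2
  rw [qA_eq q hq0 h2]
  apply div_ne_zero _ hs
  rw [sub_ne_zero]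
  intro h
  have key : q ^ (2 * (n:ℤ)) = 1 := by
    have := congrArg (· * q ^ (2*(n:ℤ) - 1)) h
    rw [← zpow_add₀ hq0, show (1:ℤ) - 2*(n:ℤ) + (2*(n:ℤ)-1) = 0 by ring] at this
    nth_rewrite 1 [← zpow_one q] at this
    rw [← zpow_add₀ hq0, show (1:ℤ) + (2*(n:ℤ)-1) = 2*n by ring] at this
    simpa using this
  apply hq (2*n) (by omega)
  rw [← zpow_natCast q]
  push_cast
  exact key

lemma qA_one (q : ℂ) (hq0 : q ≠ 0) (h2 : q ^ 2 ≠ 1) : qA q 1 = 1 := by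
  have hs := qsub_ne q hq0 h2
  unfold qA qInt
  simp [div_self hs]

lemma qInt_zero (q : ℂ) : qInt q 0 = 0 := by simp [qInt]

lemma op_rel (q : ℂ) (hq0 : q ≠ 0) (h2 : q ^ 2 ≠ 1)
    {M : Type} [AddCommGroup M] [Module ℂ M] (E F : Module.End ℂ M)
    (hrel : E * F = (q ^ (-2 : ℤ)) • (F * E) + 1) (n : ℕ) :
    E * F ^ (n + 1) = qA q (n + 1) • F ^ n + (q ^ (-2 * ((n : ℤ) + 1))) • (F ^ (n + 1) * E) := by
  induction n with
  | zero =>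
    simpa [qA_one q hq0 h2, add_comm] using hrel
  | succ n ih =>
    have h1 : E * F ^ (n + 2) = (E * F ^ (n + 1)) * F := by rw [mul_assoc, ← pow_succ]
    rw [h1, ih, add_mul, smul_mul_assoc, ← pow_succ, smul_mul_assoc, mul_assoc, hrel]
    have hexp : F ^ (n+1) * ((q:ℂ) ^ (-2:ℤ) • (F * E) + 1)
        = (q:ℂ) ^ (-2:ℤ) • (F ^ (n+2) * E) + F ^ (n+1) := by
      rw [mul_add, mul_one, mul_smul_comm, ← mul_assoc, ← pow_succ]
    rw [hexp, qA_rec q hq0 h2 (n + 1)]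
    push_cast
    match_scalars
    · ring
    · rw [mul_one, mul_one, ← zpow_add₀ hq0]
      congr 1

end WqAux

open WqAux

/-- A `W_q(sl₂)`-module `M` (operators `E`, `F` with `E∘F = q⁻²·F∘E + 1`) with `E` locally
nilpotent whose space of maximal vectors `K(M) = ker E` is one-dimensional is simple
(no proper nonzero submodule stable under `E` and `F`), and is isomorphic to `ℂ[f]` with `f`
acting by multiplication and `e` acting by the q-derivation `e·fⁿ = q^{-(n-1)}[n]·f^{n-1}`. -/
theorem Wq_module_simple_of_maximal_one_dim (q : ℂ) (hq0 : q ≠ 0)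
    (hq : ∀ n : ℕ, 0 < n → q ^ n ≠ 1)
    {M : Type} [AddCommGroup M] [Module ℂ M]
    (E F : Module.End ℂ M)
    (hrel : E * F = (q ^ (-2 : ℤ)) • (F * E) + 1)
    (hnil : ∀ m : M, ∃ l : ℕ, (E ^ l) m = 0)
    (hK : Module.finrank ℂ ↥(LinearMap.ker E) = 1)
    -- the q-derivation `D` on `ℂ[f]`, `D(fⁿ) = q^{-(n-1)}[n]·f^{n-1}`
    (D : ℂ[X] →ₗ[ℂ] ℂ[X])
    (hD : ∀ n : ℕ, D ((X : ℂ[X]) ^ n) =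
      (q ^ (-((n : ℤ) - 1)) * qInt q n) • ((X : ℂ[X]) ^ (n - 1))) :
    -- `M` is simple as a `W_q(sl₂)`-module ...
    (∀ N : Submodule ℂ M, (∀ m ∈ N, E m ∈ N) → (∀ m ∈ N, F m ∈ N) → N = ⊥ ∨ N = ⊤) ∧
    -- ... and isomorphic to the module `ℂ[f]`
    (∃ Φ : M ≃ₗ[ℂ] ℂ[X],
      (∀ m : M, Φ (F m) = X * Φ m) ∧ (∀ m : M, Φ (E m) = D (Φ m))) := by
  classical
  have h2 : q ^ 2 ≠ 1 := hq 2 (by norm_num)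
  have hs := qsub_ne q hq0 h2
  -- a highest weight vector
  obtain ⟨v, hv0, hvspan⟩ := finrank_eq_one_iff'.mp hK
  set v₀ : M := (v : M) with hv₀def
  have hv₀ : E v₀ = 0 := v.2
  have hv₀0 : v₀ ≠ 0 := fun h => hv0 (Subtype.ext h)
  have hker : ∀ w : M, E w = 0 → ∃ c : ℂ, w = c • v₀ := by
    intro w hw
    obtain ⟨c, hc⟩ := hvspan ⟨w, hw⟩
    exact ⟨c, congrArg Subtype.val hc.symm⟩
  -- the comparison map
  set Ψ : ℂ[X] →ₗ[ℂ] M :=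
    { toFun := fun p => (Polynomial.aeval F p) v₀
      map_add' := by intro p r; simp
      map_smul' := by intro c p; simp } with hΨdef
  have hΨX : ∀ n : ℕ, Ψ (X ^ n) = (F ^ n) v₀ := by
    intro n; simp [hΨdef]
  have hΨm : ∀ (n : ℕ) (c : ℂ), Ψ ((Polynomial.monomial n) c) = c • (F ^ n) v₀ := by
    intro n c
    rw [← Polynomial.smul_X_eq_monomial, map_smul, hΨX]
  -- action of E on F^n v₀
  have hEF : ∀ n : ℕ, E ((F ^ (n + 1)) v₀) = qA q (n + 1) • ((F ^ n) v₀) := by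
    intro n
    have h := congrArg (fun (T : Module.End ℂ M) => T v₀) (op_rel q hq0 h2 E F hrel n)
    simp only [Module.End.mul_apply, LinearMap.add_apply, LinearMap.smul_apply] at h
    rw [hv₀, map_zero, smul_zero, add_zero] at h
    exact h
  have hEΨ : ∀ p : ℂ[X], E (Ψ p) = Ψ (D p) := by
    intro p
    induction p using Polynomial.induction_on' with
    | add p r hp hr => simp only [map_add, hp, hr]
    | monomial n c =>
      rw [hΨm, map_smul]
      rw [← Polynomial.smul_X_eq_monomial, map_smul, map_smul, hD n]
      cases n with
      | zero =>
        simp [hv₀, qInt_zero]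
      | succ n =>
        rw [hEF n, map_smul, hΨX]
        simp only [Nat.add_sub_cancel]
        unfold qA
        push_cast
        ring_nf
  have hFΨ : ∀ p : ℂ[X], F (Ψ p) = Ψ (X * p) := by
    intro p
    simp [hΨdef, Module.End.mul_apply]
  -- powers of E on F^n v₀
  have hEn : ∀ n : ℕ, (E ^ (n + 1)) ((F ^ n) v₀) = 0 ∧
      (E ^ n) ((F ^ n) v₀) = (∏ k ∈ Finset.range n, qA q (k + 1)) • v₀ := by
    intro n
    induction n with
    | zero => simp [hv₀]
    | succ n ih =>
      constructor
      · rw [pow_succ, Module.End.mul_apply, hEF n, map_smul, ih.1, smul_zero]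
      · rw [pow_succ, Module.End.mul_apply, hEF n, map_smul, ih.2, smul_smul,
          Finset.prod_range_succ, mul_comm]
  have hEkill : ∀ m n : ℕ, n < m → (E ^ m) ((F ^ n) v₀) = 0 := by
    intro m n h
    have hm : E ^ m = E ^ (m - (n + 1)) * E ^ (n + 1) := by
      rw [← pow_add]; congr 1; omega
    rw [hm, Module.End.mul_apply, (hEn n).1, map_zero]
  have hprod_ne : ∀ n : ℕ, (∏ k ∈ Finset.range n, qA q (k + 1)) ≠ 0 := by
    intro n
    exact Finset.prod_ne_zero_iff.mpr fun k _ => qA_ne q hq0 hq (k + 1) k.succ_pos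
  -- injectivity
  have hinj : Function.Injective Ψ := by
    rw [injective_iff_map_eq_zero]
    intro p hp
    by_contra hp0
    set N := p.natDegree with hN
    have hE := congrArg (E ^ N) hp
    rw [map_zero] at hE
    have hsum : Ψ p = ∑ n ∈ Finset.range (N + 1), p.coeff n • (F ^ n) v₀ := by
      conv_lhs => rw [Polynomial.as_sum_range' p (N + 1) (Nat.lt_succ_self N)]
      rw [map_sum]
      exact Finset.sum_congr rfl fun n _ => hΨm n _
    rw [hsum, map_sum] at hE
    rw [Finset.sum_range_succ] at hE
    have hzero : ∀ n ∈ Finset.range N, (E ^ N) (p.coeff n • (F ^ n) v₀) = 0 := by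
      intro n hn
      rw [map_smul, hEkill N n (Finset.mem_range.mp hn), smul_zero]
    rw [Finset.sum_eq_zero hzero, zero_add, map_smul, (hEn N).2, smul_smul] at hE
    have := smul_eq_zero.mp hE
    rcases this with h | h
    · rcases mul_eq_zero.mp h with h' | h'
      · exact hp0 (Polynomial.leadingCoeff_eq_zero.mp h')
      · exact hprod_ne N h'
    · exact hv₀0 h
  -- antiderivative
  have hanti : ∀ p : ℂ[X], ∃ p' : ℂ[X], E (Ψ p') = Ψ p := by
    intro p
    induction p using Polynomial.induction_on' with
    | add p r hp hr =>
      obtain ⟨p', hp'⟩ := hp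
      obtain ⟨r', hr'⟩ := hr
      exact ⟨p' + r', by rw [map_add, map_add, hp', hr', map_add]⟩
    | monomial n c =>
      refine ⟨(c / qA q (n + 1)) • X ^ (n + 1), ?_⟩
      rw [map_smul, map_smul, hΨX, hEF n, hΨm, smul_smul,
        div_mul_cancel₀ c (qA_ne q hq0 hq (n + 1) n.succ_pos)]
  -- surjectivity
  have hsurj : Function.Surjective Ψ := by
    have key : ∀ (l : ℕ) (m : M), (E ^ l) m = 0 → ∃ p, Ψ p = m := by
      intro l
      induction l with
      | zero =>
        intro m hm
        simp only [pow_zero, Module.End.one_apply] at hm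
        exact ⟨0, by rw [map_zero, hm]⟩
      | succ l ih =>
        intro m hm
        have hEm : (E ^ l) (E m) = 0 := by
          rw [← Module.End.mul_apply, ← pow_succ]; exact hm
        obtain ⟨p, hp⟩ := ih (E m) hEm
        obtain ⟨p', hp'⟩ := hanti p
        have hdiff : E (m - Ψ p') = 0 := by rw [map_sub, hp', hp, sub_self]
        obtain ⟨c, hc⟩ := hker _ hdiff
        refine ⟨p' + Polynomial.C c, ?_⟩
        have hΨC : Ψ (Polynomial.C c) = c • v₀ := by
          simpa using hΨm 0 c
        rw [map_add, hΨC, ← hc, add_sub_cancel]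
    intro m
    obtain ⟨l, hl⟩ := hnil m
    exact key l m hl
  -- the equivalence
  let e : ℂ[X] ≃ₗ[ℂ] M := LinearEquiv.ofBijective Ψ ⟨hinj, hsurj⟩
  have he : ∀ p : ℂ[X], e p = Ψ p := fun p => rfl
  refine ⟨?_, ⟨e.symm, ?_, ?_⟩⟩
  · -- simplicity
    intro N hNE hNF
    rcases eq_or_ne N ⊥ with h | h
    · exact Or.inl h
    right
    obtain ⟨m, hmN, hm0⟩ := Submodule.ne_bot_iff N |>.mp h
    have hEpow : ∀ k : ℕ, (E ^ k) m ∈ N := by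
      intro k
      induction k with
      | zero => simpa using hmN
      | succ k ih => rw [pow_succ', Module.End.mul_apply]; exact hNE _ ih
    have hex : ∃ k : ℕ, (E ^ k) m = 0 := hnil m
    set l₀ := Nat.find hex with hl₀def
    have hl₀ : (E ^ l₀) m = 0 := Nat.find_spec hex
    have hl₀pos : 0 < l₀ := by
      rcases Nat.eq_zero_or_pos l₀ with h0 | h0
      · exfalso; apply hm0; have := hl₀; rw [h0] at this; simpa using this
      · exact h0
    set w := (E ^ (l₀ - 1)) m with hwdef
    have hw0 : w ≠ 0 := Nat.find_min hex (by omega)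
    have hwN : w ∈ N := hEpow _
    have hEw : E w = 0 := by
      have h1 : E ^ l₀ = E * E ^ (l₀ - 1) := by
        conv_lhs => rw [show l₀ = (l₀ - 1) + 1 by omega]
        rw [pow_succ']
      rw [hwdef, ← Module.End.mul_apply, ← h1, hl₀]
    obtain ⟨c, hc⟩ := hker w hEw
    have hc0 : c ≠ 0 := by
      rintro rfl
      rw [zero_smul] at hc
      exact hw0 hc
    have hv₀N : v₀ ∈ N := by
      have hmem := N.smul_mem c⁻¹ hwN
      rw [hc, smul_smul, inv_mul_cancel₀ hc0, one_smul] at hmem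
      exact hmem
    have hFn : ∀ n : ℕ, (F ^ n) v₀ ∈ N := by
      intro n
      induction n with
      | zero => simpa using hv₀N
      | succ n ih => rw [pow_succ', Module.End.mul_apply]; exact hNF _ ih
    have hΨN : ∀ p : ℂ[X], Ψ p ∈ N := by
      intro p
      induction p using Polynomial.induction_on' with
      | add p r hp hr => rw [map_add]; exact N.add_mem hp hr
      | monomial n c => rw [hΨm]; exact N.smul_mem c (hFn n)
    rw [Submodule.eq_top_iff']
    intro x
    obtain ⟨p, hp⟩ := hsurj x
    rw [← hp]
    exact hΨN p
  · -- F compatibility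
    intro m
    rw [LinearEquiv.symm_apply_eq, he, ← hFΨ]
    congr 1
    have : Ψ (e.symm m) = e (e.symm m) := rfl
    rw [this, e.apply_symm_apply]
  · -- E compatibility
    intro m
    rw [LinearEquiv.symm_apply_eq, he, ← hEΨ]
    congr 1
    have : Ψ (e.symm m) = e (e.symm m) := rfl
    rw [this, e.apply_symm_apply]
end

section
/- In the q-Weyl algebra W_q(sl_2) acting on C[f] (with f acting by multiplication and e·f^n = q^{-(n-1)}[n] f^{n-1}), the formula ρ(m) = ∑_{n=0}^{∞} q^{n(n-1)/2} · (f^n/[n]!) ⊗ e^n·m defines a map ρ : M → C[f] ⊗ M for any locally e-nilpotent W_q(sl_2)-module M, and ρ is coassociative with respect to the braided coproduct Δ_0 on C[f]: (Δ_0 ⊗ id)∘ρ = (id ⊗ ρ)∘ρ. -/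
open Finset

lemma qInt_ne_zero (q : ℂ) (hq0 : q ≠ 0) (hq : ∀ n : ℕ, 0 < n → q ^ n ≠ 1)
    (n : ℕ) (hn : 0 < n) : qInt q n ≠ 0 := by
  have hden : q - q⁻¹ ≠ 0 := by
    intro h
    have h1 : q = q⁻¹ := sub_eq_zero.mp h
    have : q ^ 2 = 1 := by
      rw [pow_two]; nth_rewrite 2 [h1]; field_simp
    exact hq 2 (by norm_num) this
  have hnum : q ^ n - q⁻¹ ^ n ≠ 0 := by
    intro h
    have h1 : q ^ n = q⁻¹ ^ n := sub_eq_zero.mp h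
    have : q ^ (2 * n) = 1 := by
      rw [two_mul, pow_add]; nth_rewrite 2 [h1]
      rw [← mul_pow, mul_inv_cancel₀ hq0, one_pow]
    exact hq (2 * n) (by omega) this
  exact div_ne_zero hnum hden

lemma qFact_ne_zero (q : ℂ) (hq0 : q ≠ 0) (hq : ∀ n : ℕ, 0 < n → q ^ n ≠ 1)
    (n : ℕ) : qFact q n ≠ 0 := by
  unfold qFact
  exact Finset.prod_ne_zero_iff.mpr fun i _ => qInt_ne_zero q hq0 hq (i + 1) (Nat.succ_pos i)

lemma tri_two (n : ℕ) : 2 * (n * (n - 1) / 2) = n * (n - 1) := by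
  cases n with
  | zero => simp
  | succ k =>
    rw [Nat.succ_sub_one]
    exact Nat.mul_div_cancel' (by simpa [Nat.mul_comm] using (Nat.even_mul_succ_self k).two_dvd)

lemma tri_add (a b : ℕ) : (a + b) * ((a + b) - 1) / 2 = a * (a - 1) / 2 + b * (b - 1) / 2 + a * b := by
  apply Nat.eq_of_mul_eq_mul_left (show 0 < 2 by norm_num)
  rw [tri_two, Nat.mul_add, Nat.mul_add, tri_two, tri_two]
  rcases a with _ | a <;> rcases b with _ | b
  · simp
  · simp
  · simp
  · simp only [Nat.succ_sub_one, show a + 1 + (b + 1) - 1 = a + b + 1 by omega]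
    ring

lemma coef_id (q : ℂ) (hq0 : q ≠ 0) (hq : ∀ n : ℕ, 0 < n → q ^ n ≠ 1)
    (n p : ℕ) (h : p ≤ n) :
    q ^ (n * (n - 1) / 2) / qFact q n * (qBinom q n p * q ^ ((p : ℤ) ^ 2 - (n : ℤ) * p)) =
      (q ^ (p * (p - 1) / 2) / qFact q p) *
        (q ^ ((n - p) * ((n - p) - 1) / 2) / qFact q (n - p)) := by
  obtain ⟨b, rfl⟩ := Nat.exists_eq_add_of_le h
  have h1 : ((p : ℤ) ^ 2 - ((p + b : ℕ) : ℤ) * p) = -((p * b : ℕ) : ℤ) := by push_cast; ring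
  rw [h1, zpow_neg, zpow_natCast, qBinom, Nat.add_sub_cancel_left, tri_add, pow_add, pow_add]
  have fa := qFact_ne_zero q hq0 hq p
  have fb := qFact_ne_zero q hq0 hq b
  have fab := qFact_ne_zero q hq0 hq (p + b)
  have hpow : q ^ (p * b) ≠ 0 := pow_ne_zero _ hq0
  field_simp

lemma sum_tri (l : ℕ) {A : Type*} [AddCommMonoid A] (g : ℕ → ℕ → A)
    (hg : ∀ a b, l ≤ a + b → g a b = 0) :
    ∑ n ∈ range l, ∑ p ∈ range (n + 1), g p (n - p) =
      ∑ n ∈ range l, ∑ k ∈ range l, g n k := by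
  have h1 : ∀ n : ℕ, ∑ p ∈ range (n + 1), g p (n - p) =
      ∑ ab ∈ Finset.HasAntidiagonal.antidiagonal n, g ab.1 ab.2 := fun n =>
    (Finset.Nat.sum_antidiagonal_eq_sum_range_succ_mk (fun ab => g ab.1 ab.2) n).symm
  simp only [h1]
  rw [← Finset.sum_biUnion]
  · rw [← Finset.sum_product']
    apply Finset.sum_subset
    · intro ab hab
      simp only [Finset.mem_biUnion, Finset.mem_range, Finset.HasAntidiagonal.mem_antidiagonal] at hab
      obtain ⟨n, hn, hsum⟩ := hab
      simp only [Finset.mem_product, Finset.mem_range]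
      omega
    · intro ab hab hnab
      apply hg
      by_contra hcon
      push_neg at hcon
      exact hnab (Finset.mem_biUnion.mpr ⟨ab.1 + ab.2, Finset.mem_range.mpr hcon,
        Finset.HasAntidiagonal.mem_antidiagonal.mpr rfl⟩)
  · intro x hx y hy hxy
    apply Finset.disjoint_left.mpr
    intro ab h1 h2
    rw [Finset.HasAntidiagonal.mem_antidiagonal] at h1 h2
    exact hxy (h1 ▸ h2)

open TensorProduct Polynomial

/-- For a locally `e`-nilpotent `W_q(sl₂)`-module `M` (operators `E`, `F` with
`E∘F = q⁻²·F∘E + 1`), the formula `ρ(m) = ∑ₙ q^{n(n-1)/2}·(fⁿ/[n]!) ⊗ Eⁿ·m` is well defined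
(the truncated sums are independent of the truncation point) and is coassociative with respect
to the braided coproduct `Δ₀` on `ℂ[f]`: `(Δ₀ ⊗ id)∘ρ = (id ⊗ ρ)∘ρ`. -/
theorem Wq_coaction_coassoc (q : ℂ) (hq0 : q ≠ 0) (hq : ∀ n : ℕ, 0 < n → q ^ n ≠ 1)
    {M : Type} [AddCommGroup M] [Module ℂ M]
    (E F : Module.End ℂ M)
    (hrel : E * F = (q ^ (-2 : ℤ)) • (F * E) + 1)
    (hnil : ∀ m : M, ∃ l : ℕ, (E ^ l) m = 0)
    -- the braided coproduct on `ℂ[f]`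
    (Δ₀ : ℂ[X] →ₗ[ℂ] ℂ[X] ⊗[ℂ] ℂ[X])
    (hΔ₀ : ∀ n : ℕ, Δ₀ ((X : ℂ[X]) ^ n) =
      ∑ p ∈ Finset.range (n + 1),
        (qBinom q n p * q ^ ((p : ℤ) ^ 2 - (n : ℤ) * p)) •
          (((X : ℂ[X]) ^ p) ⊗ₜ[ℂ] ((X : ℂ[X]) ^ (n - p)))) :
    -- well-definedness of `ρ`: the truncated sums agree
    (∀ (m : M) (l l' : ℕ), (E ^ l) m = 0 → (E ^ l') m = 0 →
      (∑ n ∈ Finset.range l,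
          ((q ^ (n * (n - 1) / 2) / qFact q n) : ℂ) • (((X : ℂ[X]) ^ n) ⊗ₜ[ℂ] (E ^ n) m)) =
        ∑ n ∈ Finset.range l',
          ((q ^ (n * (n - 1) / 2) / qFact q n) : ℂ) • (((X : ℂ[X]) ^ n) ⊗ₜ[ℂ] (E ^ n) m)) ∧
    -- coassociativity `(Δ₀ ⊗ id)∘ρ = (id ⊗ ρ)∘ρ`
    (∀ (m : M) (l : ℕ), (E ^ l) m = 0 →
      (TensorProduct.assoc ℂ ℂ[X] ℂ[X] M)
          ((TensorProduct.map Δ₀ LinearMap.id)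
            (∑ n ∈ Finset.range l,
              ((q ^ (n * (n - 1) / 2) / qFact q n) : ℂ) •
                (((X : ℂ[X]) ^ n) ⊗ₜ[ℂ] (E ^ n) m))) =
        ∑ n ∈ Finset.range l,
          ((q ^ (n * (n - 1) / 2) / qFact q n) : ℂ) •
            (((X : ℂ[X]) ^ n) ⊗ₜ[ℂ]
              (∑ k ∈ Finset.range l,
                ((q ^ (k * (k - 1) / 2) / qFact q k) : ℂ) •
                  (((X : ℂ[X]) ^ k) ⊗ₜ[ℂ] (E ^ k) ((E ^ n) m))))) := by
  have hvanish : ∀ (m : M) (l n : ℕ), (E ^ l) m = 0 → l ≤ n → (E ^ n) m = 0 := by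
    intro m l n h0 hle
    obtain ⟨k, rfl⟩ := Nat.exists_eq_add_of_le hle
    rw [add_comm, pow_add, Module.End.mul_apply, h0, map_zero]
  constructor
  · intro m l l' hl hl'
    have key : ∀ (a b : ℕ), a ≤ b → (E ^ a) m = 0 →
        (∑ n ∈ Finset.range a,
          ((q ^ (n * (n - 1) / 2) / qFact q n) : ℂ) • (((X : ℂ[X]) ^ n) ⊗ₜ[ℂ] (E ^ n) m)) =
        ∑ n ∈ Finset.range b,
          ((q ^ (n * (n - 1) / 2) / qFact q n) : ℂ) • (((X : ℂ[X]) ^ n) ⊗ₜ[ℂ] (E ^ n) m) := by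
      intro a b hab h0
      apply Finset.sum_subset (Finset.range_subset_range.mpr hab)
      intro n _ hn
      rw [Finset.mem_range, not_lt] at hn
      rw [hvanish m a n h0 hn, tmul_zero, smul_zero]
    rw [key l (max l l') (le_max_left _ _) hl, key l' (max l l') (le_max_right _ _) hl']
  · intro m l hl
    set c : ℕ → ℂ := fun n => q ^ (n * (n - 1) / 2) / qFact q n with hc
    set g : ℕ → ℕ → (ℂ[X] ⊗[ℂ] (ℂ[X] ⊗[ℂ] M)) := fun a b =>
      (c a * c b) • (((X : ℂ[X]) ^ a) ⊗ₜ[ℂ] (((X : ℂ[X]) ^ b) ⊗ₜ[ℂ] (E ^ (a + b)) m)) with hgdef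
    have hg0 : ∀ a b, l ≤ a + b → g a b = 0 := by
      intro a b hab
      rw [hgdef]
      simp only
      rw [hvanish m l (a + b) hl hab, tmul_zero, tmul_zero, smul_zero]
    have step1 : ∀ n : ℕ,
        (TensorProduct.assoc ℂ ℂ[X] ℂ[X] M)
          ((TensorProduct.map Δ₀ LinearMap.id) (((X : ℂ[X]) ^ n) ⊗ₜ[ℂ] (E ^ n) m)) =
        ∑ p ∈ Finset.range (n + 1),
          (qBinom q n p * q ^ ((p : ℤ) ^ 2 - (n : ℤ) * p)) •
            (((X : ℂ[X]) ^ p) ⊗ₜ[ℂ] (((X : ℂ[X]) ^ (n - p)) ⊗ₜ[ℂ] (E ^ n) m)) := by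
      intro n
      rw [TensorProduct.map_tmul, LinearMap.id_apply, hΔ₀, TensorProduct.sum_tmul]
      rw [show ⇑(TensorProduct.assoc ℂ ℂ[X] ℂ[X] M)
          = ⇑(TensorProduct.assoc ℂ ℂ[X] ℂ[X] M).toLinearMap from rfl, map_sum]
      refine Finset.sum_congr rfl fun p _ => ?_
      rw [← TensorProduct.smul_tmul', map_smul]
      rw [show (TensorProduct.assoc ℂ ℂ[X] ℂ[X] M).toLinearMap
          ((((X : ℂ[X]) ^ p) ⊗ₜ[ℂ] ((X : ℂ[X]) ^ (n - p))) ⊗ₜ[ℂ] (E ^ n) m)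
          = ((X : ℂ[X]) ^ p) ⊗ₜ[ℂ] (((X : ℂ[X]) ^ (n - p)) ⊗ₜ[ℂ] (E ^ n) m)
        from TensorProduct.assoc_tmul _ _ _]
    calc (TensorProduct.assoc ℂ ℂ[X] ℂ[X] M)
          ((TensorProduct.map Δ₀ LinearMap.id)
            (∑ n ∈ Finset.range l, c n • (((X : ℂ[X]) ^ n) ⊗ₜ[ℂ] (E ^ n) m)))
        = ∑ n ∈ Finset.range l, ∑ p ∈ Finset.range (n + 1), g p (n - p) := by
          rw [show ⇑(TensorProduct.assoc ℂ ℂ[X] ℂ[X] M)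
            = ⇑(TensorProduct.assoc ℂ ℂ[X] ℂ[X] M).toLinearMap from rfl]
          rw [map_sum, map_sum]
          refine Finset.sum_congr rfl fun n _ => ?_
          rw [map_smul, map_smul]
          rw [show ⇑(TensorProduct.assoc ℂ ℂ[X] ℂ[X] M).toLinearMap
            = ⇑(TensorProduct.assoc ℂ ℂ[X] ℂ[X] M) from rfl]
          rw [step1, Finset.smul_sum]
          refine Finset.sum_congr rfl fun p hp => ?_
          rw [Finset.mem_range, Nat.lt_succ_iff] at hp
          have hE : (E ^ (p + (n - p))) m = (E ^ n) m := by
            rw [Nat.add_sub_cancel' hp]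
          rw [smul_smul, hgdef]
          simp only
          rw [coef_id q hq0 hq n p hp, hE]
      _ = ∑ n ∈ Finset.range l, ∑ k ∈ Finset.range l, g n k := sum_tri l g hg0
      _ = ∑ n ∈ Finset.range l, c n • (((X : ℂ[X]) ^ n) ⊗ₜ[ℂ]
            (∑ k ∈ Finset.range l, c k • (((X : ℂ[X]) ^ k) ⊗ₜ[ℂ] (E ^ k) ((E ^ n) m)))) := by
          refine Finset.sum_congr rfl fun n hn => ?_
          rw [tmul_sum, Finset.smul_sum]
          refine Finset.sum_congr rfl fun k hk => ?_
          have hE : (E ^ k) ((E ^ n) m) = (E ^ (n + k)) m := by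
            rw [← Module.End.mul_apply, ← pow_add, add_comm k n]
          rw [tmul_smul, smul_smul, hE, hgdef]
end
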